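/- arXiv:2302.07127 — 8 statements merged into one kernel-verified Lean document; each statement's English description precedes it below -/
import Mathlib

section
/- For every real m > 0 and every C ∈ ℝ, the polynomial p_C satisfies p_C(1) = 2 and p_C(m+1) = −2, p_C has exactly one root γ₀ in [1, m+1] and at most one critical point in [1, m+1], the polynomial γ ↦ p_C(γ)·γ also has γ₀ as its unique root in [1, m+1], and both p_C(γ) and p_C(γ)·γ are strictly positive on [1, γ₀) and strictly negative on (γ₀, m+1]. -/
open Set Filter

/-- The coefficient `A(C)` from the paper (depending on `m`). -/
noncomputable def Acoef (m C : ℝ) : ℝ :=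
  3 * C / m * (1 - 1 / (m + 1) ^ 2) - 6 / m * (1 + 1 / (m + 1) ^ 2)

/-- The coefficient `B(C)` from the paper (depending on `m`). -/
noncomputable def Bcoef (m C : ℝ) : ℝ :=
  -2 * C * (1 + 1 / m - 1 / (m * (m + 1) ^ 2)) + 4 * (1 + 1 / m + 1 / (m * (m + 1) ^ 2))

/-- The polynomial `p_C(γ) = A(C)·γ³/3 + B(C)·γ²/2 + C`. -/
noncomputable def pC (m C γ : ℝ) : ℝ :=
  Acoef m C * γ ^ 3 / 3 + Bcoef m C * γ ^ 2 / 2 + C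

/-- Helper: decreasing-then-monotone shape. -/
lemma down_up_aux (f : ℝ → ℝ) (a b c : ℝ) (hc : c ∈ Set.Icc a b)
    (hfa : f a = 2) (hfb : f b = -2)
    (hanti : StrictAntiOn f (Set.Icc a c)) (hmono : MonotoneOn f (Set.Icc c b))
    (hcont : ContinuousOn f (Set.Icc a b)) :
    ∃ γ₀ ∈ Set.Icc a b, f γ₀ = 0 ∧ (∀ γ ∈ Set.Ico a γ₀, 0 < f γ) ∧
      (∀ γ ∈ Set.Ioc γ₀ b, f γ < 0) := by
  have hcb : f c ≤ f b := hmono ⟨le_refl c, hc.2⟩ ⟨hc.2, le_refl b⟩ hc.2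
  have hfc : f c ≤ -2 := by linarith
  have hsub : Set.Icc a c ⊆ Set.Icc a b := Set.Icc_subset_Icc le_rfl hc.2
  obtain ⟨γ₀, hmem, hroot⟩ := intermediate_value_Icc' hc.1 (hcont.mono hsub)
    (show (0:ℝ) ∈ Set.Icc (f c) (f a) from ⟨by linarith, by linarith⟩)
  refine ⟨γ₀, ⟨hmem.1, hmem.2.trans hc.2⟩, hroot, ?_, ?_⟩
  · intro γ hγ
    have h := hanti ⟨hγ.1, hγ.2.le.trans hmem.2⟩ hmem hγ.2
    linarith
  · intro γ hγ
    rcases le_or_gt γ c with h | h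
    · have h2 := hanti hmem ⟨hmem.1.trans hγ.1.le, h⟩ hγ.1
      linarith
    · have h2 := hmono ⟨h.le, hγ.2⟩ ⟨hc.2, le_refl b⟩ hγ.2
      linarith

/-- Helper: monotone-then-decreasing shape. -/
lemma up_down_aux (f : ℝ → ℝ) (a b c : ℝ) (hc : c ∈ Set.Icc a b)
    (hfa : f a = 2) (hfb : f b = -2)
    (hmono : MonotoneOn f (Set.Icc a c)) (hanti : StrictAntiOn f (Set.Icc c b))
    (hcont : ContinuousOn f (Set.Icc a b)) :
    ∃ γ₀ ∈ Set.Icc a b, f γ₀ = 0 ∧ (∀ γ ∈ Set.Ico a γ₀, 0 < f γ) ∧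
      (∀ γ ∈ Set.Ioc γ₀ b, f γ < 0) := by
  have hac : f a ≤ f c := hmono ⟨le_refl a, hc.1⟩ ⟨hc.1, le_refl c⟩ hc.1
  have hfc : 2 ≤ f c := by linarith
  have hsub : Set.Icc c b ⊆ Set.Icc a b := Set.Icc_subset_Icc hc.1 le_rfl
  obtain ⟨γ₀, hmem, hroot⟩ := intermediate_value_Icc' hc.2 (hcont.mono hsub)
    (show (0:ℝ) ∈ Set.Icc (f b) (f c) from ⟨by linarith, by linarith⟩)
  refine ⟨γ₀, ⟨hc.1.trans hmem.1, hmem.2⟩, hroot, ?_, ?_⟩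
  · intro γ hγ
    rcases lt_or_ge γ c with h | h
    · have h2 := hmono ⟨le_refl a, hc.1⟩ ⟨hγ.1, h.le⟩ hγ.1
      linarith
    · have h2 := hanti ⟨h, hγ.2.le.trans hmem.2⟩ hmem hγ.2
      linarith
  · intro γ hγ
    have h2 := hanti hmem ⟨hmem.1.trans hγ.1.le, hγ.2⟩ hγ.1
    linarith

/-- Lemma 2.3.1 (Pingali): `p_C(1) = 2`, `p_C(m+1) = −2`, `p_C` has exactly one root
`γ₀` in `[1, m+1]` and at most one critical point there, `γ ↦ p_C(γ)·γ` also has `γ₀`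
as its unique root in `[1, m+1]`, and both `p_C` and `p_C(γ)·γ` are strictly positive
on `[1, γ₀)` and strictly negative on `(γ₀, m+1]`. -/
theorem stmt0 (m : ℝ) (hm : 0 < m) (C : ℝ) :
    pC m C 1 = 2 ∧ pC m C (m + 1) = -2 ∧
    {γ ∈ Set.Icc 1 (m + 1) | deriv (pC m C) γ = 0}.Subsingleton ∧
    ∃ γ₀ ∈ Set.Icc (1 : ℝ) (m + 1),
      pC m C γ₀ = 0 ∧
      (∀ γ ∈ Set.Icc (1 : ℝ) (m + 1), pC m C γ = 0 → γ = γ₀) ∧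
      pC m C γ₀ * γ₀ = 0 ∧
      (∀ γ ∈ Set.Icc (1 : ℝ) (m + 1), pC m C γ * γ = 0 → γ = γ₀) ∧
      (∀ γ ∈ Set.Ico (1 : ℝ) γ₀, 0 < pC m C γ ∧ 0 < pC m C γ * γ) ∧
      (∀ γ ∈ Set.Ioc γ₀ (m + 1), pC m C γ < 0 ∧ pC m C γ * γ < 0) := by
  have hm0 : m ≠ 0 := hm.ne'
  have hm1 : (m + 1) ≠ 0 := by positivity
  have hp1 : pC m C 1 = 2 := by
    unfold pC Acoef Bcoef; field_simp; ring
  have hpm : pC m C (m + 1) = -2 := by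
    unfold pC Acoef Bcoef; field_simp; ring
  obtain ⟨A, hA⟩ : ∃ a : ℝ, a = Acoef m C := ⟨_, rfl⟩
  obtain ⟨B, hB⟩ : ∃ b : ℝ, b = Bcoef m C := ⟨_, rfl⟩
  have he : pC m C = fun x : ℝ => A * x ^ 3 / 3 + B * x ^ 2 / 2 + C := by
    rw [hA, hB]; rfl
  have hderiv : ∀ γ : ℝ, HasDerivAt (pC m C) (A * γ ^ 2 + B * γ) γ := by
    intro γ
    have h : HasDerivAt (fun x : ℝ => A * x ^ 3 / 3 + B * x ^ 2 / 2 + C)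
        (A * (↑3 * γ ^ 2) / 3 + B * (↑2 * γ ^ 1) / 2) γ :=
      ((((hasDerivAt_pow 3 γ).const_mul _).div_const 3).add
        (((hasDerivAt_pow 2 γ).const_mul _).div_const 2)).add_const C
    rw [he]; convert h using 1; ring
  have hdval : ∀ γ : ℝ, deriv (pC m C) γ = A * γ ^ 2 + B * γ := fun γ => (hderiv γ).deriv
  have hcont : Continuous (pC m C) := by rw [he]; fun_prop
  have e1 : A / 3 + B / 2 + C = 2 := by
    have := hp1; rw [he] at this; norm_num at this; linarith
  have e2 : A * (m + 1) ^ 3 / 3 + B * (m + 1) ^ 2 / 2 + C = -2 := by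
    have := hpm; rw [he] at this; linarith
  have h1m : (1 : ℝ) < m + 1 := by linarith
  -- critical points subsingleton
  have hcritsub : {γ ∈ Set.Icc 1 (m + 1) | deriv (pC m C) γ = 0}.Subsingleton := by
    intro x hx y hy
    simp only [Set.mem_setOf_eq, hdval] at hx hy
    have hx1 : (1:ℝ) ≤ x := hx.1.1
    have hy1 : (1:ℝ) ≤ y := hy.1.1
    have hx0 : x ≠ 0 := by linarith
    have hy0 : y ≠ 0 := by linarith
    have hxe : A * x + B = 0 := by
      have hz : x * (A * x + B) = 0 := by nlinarith [hx.2]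
      rcases mul_eq_zero.1 hz with h | h
      · exact absurd h hx0
      · exact h
    have hye : A * y + B = 0 := by
      have hz : y * (A * y + B) = 0 := by nlinarith [hy.2]
      rcases mul_eq_zero.1 hz with h | h
      · exact absurd h hy0
      · exact h
    rcases eq_or_ne A 0 with hA0 | hA0
    · exfalso
      have hB0 : B = 0 := by rw [hA0] at hxe; linarith
      rw [hA0, hB0] at e1 e2
      norm_num at e1 e2
      linarith
    · have h : A * x = A * y := by linarith
      exact mul_left_cancel₀ hA0 h
  -- core sign structure
  have hcore : ∃ γ₀ ∈ Set.Icc (1:ℝ) (m + 1), pC m C γ₀ = 0 ∧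
      (∀ γ ∈ Set.Ico (1:ℝ) γ₀, 0 < pC m C γ) ∧
      (∀ γ ∈ Set.Ioc γ₀ (m + 1), pC m C γ < 0) := by
    rcases lt_trichotomy A 0 with hAneg | hA0 | hApos
    · -- A < 0 : increasing then decreasing, critical point c = -B/A
      have hAne : A ≠ 0 := ne_of_lt hAneg
      obtain ⟨c, hc⟩ : ∃ c : ℝ, c = -B / A := ⟨_, rfl⟩
      have hAc : A * c = -B := by rw [hc]; field_simp
      have hkey : ∀ γ : ℝ, A * γ ^ 2 + B * γ = A * γ * (γ - c) := by
        intro γ; linear_combination γ * hAc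
      have hclt : c < m + 1 := by
        by_contra hcge
        push_neg at hcge
        have hmono : StrictMonoOn (pC m C) (Set.Icc 1 (m + 1)) := by
          apply strictMonoOn_of_deriv_pos (convex_Icc _ _) hcont.continuousOn
          intro γ hγ
          rw [interior_Icc] at hγ
          rw [hdval, hkey]
          have hγ0 : (0:ℝ) < γ := by linarith [hγ.1]
          exact mul_pos_of_neg_of_neg (mul_neg_of_neg_of_pos hAneg hγ0)
            (by linarith [hγ.2])
        have := hmono ⟨le_refl 1, h1m.le⟩ ⟨h1m.le, le_refl _⟩ h1m
        rw [hp1, hpm] at this; linarith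
      set c' := max 1 c with hc'
      have hc'mem : c' ∈ Set.Icc (1:ℝ) (m + 1) := ⟨le_max_left _ _, max_le h1m.le hclt.le⟩
      apply up_down_aux (pC m C) 1 (m + 1) c' hc'mem hp1 hpm _ _ hcont.continuousOn
      · -- MonotoneOn on [1, c']
        rcases le_or_gt c 1 with h | h
        · have hcc : c' = 1 := max_eq_left h
          rw [hcc]
          intro x hx y hy hxy
          have hxy2 : x = y := le_antisymm hxy (by linarith [hx.1, hy.2])
          rw [hxy2]
        · have hcc : c' = c := max_eq_right h.le
          rw [hcc]
          apply (strictMonoOn_of_deriv_pos (convex_Icc _ _) hcont.continuousOn ?_).monotoneOn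
          intro γ hγ
          rw [interior_Icc] at hγ
          rw [hdval, hkey]
          have hγ0 : (0:ℝ) < γ := by linarith [hγ.1]
          exact mul_pos_of_neg_of_neg (mul_neg_of_neg_of_pos hAneg hγ0)
            (by linarith [hγ.2])
      · -- StrictAntiOn on [c', m+1]
        apply strictAntiOn_of_deriv_neg (convex_Icc _ _) hcont.continuousOn
        intro γ hγ
        rw [interior_Icc] at hγ
        rw [hdval, hkey]
        have h1 : (1:ℝ) ≤ c' := le_max_left _ _
        have h2 : c ≤ c' := le_max_right _ _
        have hγ0 : (0:ℝ) < γ := by linarith [hγ.1]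
        exact mul_neg_of_neg_of_pos (mul_neg_of_neg_of_pos hAneg hγ0)
          (by linarith [hγ.1])
    · -- A = 0 : B < 0, strictly decreasing on the whole interval
      have hBneg : B < 0 := by
        by_contra hBge
        push_neg at hBge
        have hsq : (1:ℝ) ≤ (m + 1) ^ 2 := by nlinarith
        have hmul : B * 1 ≤ B * (m + 1) ^ 2 := mul_le_mul_of_nonneg_left hsq hBge
        rw [hA0] at e1 e2
        nlinarith
      apply down_up_aux (pC m C) 1 (m + 1) (m + 1) ⟨h1m.le, le_refl _⟩ hp1 hpm _ _
        hcont.continuousOn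
      · apply strictAntiOn_of_deriv_neg (convex_Icc _ _) hcont.continuousOn
        intro γ hγ
        rw [interior_Icc] at hγ
        rw [hdval, hA0]
        have hγ0 : (0:ℝ) < γ := by linarith [hγ.1]
        nlinarith [mul_neg_of_neg_of_pos hBneg hγ0]
      · intro x hx y hy hxy
        have hxy2 : x = y := le_antisymm hxy (by linarith [hx.1, hy.2])
        rw [hxy2]
    · -- A > 0 : decreasing then increasing, critical point c = -B/A
      have hAne : A ≠ 0 := ne_of_gt hApos
      obtain ⟨c, hc⟩ : ∃ c : ℝ, c = -B / A := ⟨_, rfl⟩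
      have hAc : A * c = -B := by rw [hc]; field_simp
      have hkey : ∀ γ : ℝ, A * γ ^ 2 + B * γ = A * γ * (γ - c) := by
        intro γ; linear_combination γ * hAc
      have hcgt : 1 < c := by
        by_contra hcle
        push_neg at hcle
        have hmono : StrictMonoOn (pC m C) (Set.Icc 1 (m + 1)) := by
          apply strictMonoOn_of_deriv_pos (convex_Icc _ _) hcont.continuousOn
          intro γ hγ
          rw [interior_Icc] at hγ
          rw [hdval, hkey]
          have hγ0 : (0:ℝ) < γ := by linarith [hγ.1]
          exact mul_pos (mul_pos hApos hγ0) (by linarith [hγ.1])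
        have := hmono ⟨le_refl 1, h1m.le⟩ ⟨h1m.le, le_refl _⟩ h1m
        rw [hp1, hpm] at this; linarith
      set c' := min c (m + 1) with hc'
      have hc'mem : c' ∈ Set.Icc (1:ℝ) (m + 1) := ⟨le_min hcgt.le h1m.le, min_le_right _ _⟩
      apply down_up_aux (pC m C) 1 (m + 1) c' hc'mem hp1 hpm _ _ hcont.continuousOn
      · -- StrictAntiOn on [1, c']
        apply strictAntiOn_of_deriv_neg (convex_Icc _ _) hcont.continuousOn
        intro γ hγ
        rw [interior_Icc] at hγ
        rw [hdval, hkey]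
        have h1 : c' ≤ c := min_le_left _ _
        have hγ0 : (0:ℝ) < γ := by linarith [hγ.1]
        exact mul_neg_of_pos_of_neg (mul_pos hApos hγ0) (by linarith [hγ.2])
      · -- MonotoneOn on [c', m+1]
        rcases le_or_gt (m + 1) c with h | h
        · have hcc : c' = m + 1 := min_eq_right h
          rw [hcc]
          intro x hx y hy hxy
          have hxy2 : x = y := le_antisymm hxy (by linarith [hx.1, hy.2])
          rw [hxy2]
        · have hcc : c' = c := min_eq_left h.le
          rw [hcc]
          apply (strictMonoOn_of_deriv_pos (convex_Icc _ _) hcont.continuousOn ?_).monotoneOn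
          intro γ hγ
          rw [interior_Icc] at hγ
          rw [hdval, hkey]
          have hγ0 : (0:ℝ) < γ := by linarith [hγ.1, hcgt]
          exact mul_pos (mul_pos hApos hγ0) (by linarith [hγ.1])
  -- assemble
  obtain ⟨γ₀, hγ₀mem, hγ₀root, hpos, hneg⟩ := hcore
  refine ⟨hp1, hpm, hcritsub, γ₀, hγ₀mem, hγ₀root, ?_, by rw [hγ₀root]; ring, ?_, ?_, ?_⟩
  · intro γ hγ hγ0
    by_contra hne
    rcases lt_or_gt_of_ne hne with h | h
    · have := hpos γ ⟨hγ.1, h⟩; linarith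
    · have := hneg γ ⟨h, hγ.2⟩; linarith
  · intro γ hγ hγ0
    have hγpos : (0:ℝ) < γ := by linarith [hγ.1]
    have hz : pC m C γ = 0 := by
      rcases mul_eq_zero.1 hγ0 with h | h
      · exact h
      · exact absurd h (ne_of_gt hγpos)
    by_contra hne
    rcases lt_or_gt_of_ne hne with h | h
    · have := hpos γ ⟨hγ.1, h⟩; linarith
    · have := hneg γ ⟨h, hγ.2⟩; linarith
  · intro γ hγ
    have h1 := hpos γ hγ
    have hγpos : (0:ℝ) < γ := by linarith [hγ.1]
    exact ⟨h1, mul_pos h1 hγpos⟩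
  · intro γ hγ
    have h1 := hneg γ hγ
    have hγpos : (0:ℝ) < γ := by linarith [hγ₀mem.1, hγ.1]
    exact ⟨h1, mul_neg_of_neg_of_pos h1 hγpos⟩
end

section
/- For every real m > 0 and C ∈ ℝ, if v : [1, m+1] → ℝ is a C¹ nonnegative function satisfying v'(γ) = 2√2·√(v(γ)) + p_C(γ)·γ on [1, m+1] together with both boundary conditions v(1) = 2 and v(m+1) = 2(m+1)², then v(γ) > 2γ² for all γ in the open interval (1, m+1). -/
open Set Filter

/-- The right-hand side `2√2·√(v γ) + p_C(γ)·γ` of the ODE. -/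
noncomputable def odeRHS (m C : ℝ) (v : ℝ → ℝ) (γ : ℝ) : ℝ :=
  2 * Real.sqrt 2 * Real.sqrt (v γ) + pC m C γ * γ

/-- `v` is a `C¹` nonnegative solution of the ODE IVP
`v' = 2√2·√v + p_C(γ)·γ`, `v 1 = 2`, on the set `S`. -/
def IsSolOn (m C : ℝ) (v : ℝ → ℝ) (S : Set ℝ) : Prop :=
  v 1 = 2 ∧ ∀ γ ∈ S, 0 ≤ v γ ∧ HasDerivWithinAt v (odeRHS m C v γ) S γ

/-- `v` is a solution of the IVP on `S` which cannot be continued to any strictly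
larger subinterval of `[1, m+1]`, i.e. `S` is the maximal interval of existence. -/
def IsMaxSolOn (m C : ℝ) (v : ℝ → ℝ) (S : Set ℝ) : Prop :=
  IsSolOn m C v S ∧
    ∀ T : Set ℝ, T ⊆ Set.Icc 1 (m + 1) → T.OrdConnected → S ⊆ T → S ≠ T →
      ¬∃ w : ℝ → ℝ, IsSolOn m C w T ∧ ∀ γ ∈ S, w γ = v γ

/-!
Put `h = v - 2γ²`. Since `√v - √2 γ = h / (√v + √2 γ)`, the ODE becomes the linear equation
`h' = a h + p_C(γ) γ` with a continuous coefficient `a`, and `h` vanishes at both ends. If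
`h(γ) ≤ 0` at an interior point, the mean value theorem applied to `h · exp (-∫ a)` on both sides
of `γ` gives `ξ₁ < γ < ξ₂` with `p_C(ξ₁) ≤ 0 ≤ p_C(ξ₂)`. With `p_C(1) = 2` and `p_C(m+1) = -2`,
`p_C` would decrease, increase and decrease again on `(1, m+1)`, which is impossible because
`p_C'(γ) = γ (A γ + B)` changes sign at most once for `γ > 0`.
-/

open Real

theorem ContinuousOn.exists_hasDerivAt_Icc {f : ℝ → ℝ} {a b : ℝ} (hab : a ≤ b)
    (hf : ContinuousOn f (Icc a b)) : ∃ F : ℝ → ℝ, ∀ x ∈ Icc a b, HasDerivAt F (f x) x := by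
  set g : ℝ → ℝ := fun x => f (projIcc a b hab x)
  have hg : Continuous g :=
    hf.comp_continuous (continuous_subtype_val.comp continuous_projIcc) fun x =>
      (projIcc a b hab x).2
  refine ⟨fun u => ∫ x in a..u, g x, fun x hx => ?_⟩
  simpa [g, projIcc_of_mem hab hx] using (hg.integral_hasStrictDerivAt a x).hasDerivAt

theorem exists_forcing_nonpos_nonneg_of_hasDerivWithinAt_linear {h a q : ℝ → ℝ} {x y t : ℝ}
    (hxt : x < t) (hty : t < y) (ha : ContinuousOn a (Icc x y))
    (hh : ∀ s ∈ Icc x y, HasDerivWithinAt h (a s * h s + q s) (Icc x y) s)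
    (hx : h x = 0) (hy : h y = 0) (ht : h t ≤ 0) :
    (∃ ξ ∈ Ioo x t, q ξ ≤ 0) ∧ ∃ ξ ∈ Ioo t y, 0 ≤ q ξ := by
  obtain ⟨F, hF⟩ := ha.exists_hasDerivAt_Icc (hxt.trans hty).le
  set g : ℝ → ℝ := fun s => h s * exp (-F s)
  have hg : ∀ s ∈ Icc x y, HasDerivWithinAt g (exp (-F s) * q s) (Icc x y) s := by
    intro s hs
    have hE : HasDerivAt (fun s => exp (-F s)) (exp (-F s) * -a s) s := (hF s hs).neg.exp
    exact ((hh s hs).fun_mul hE.hasDerivWithinAt).congr_deriv (by ring)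
  have mvt : ∀ u w, x ≤ u → u < w → w ≤ y →
      ∃ ξ ∈ Ioo u w, exp (-F ξ) * q ξ = (g w - g u) / (w - u) := fun u w hu huw hw =>
    exists_hasDerivAt_eq_slope g _ huw
      (fun s hs => (hg s ⟨hu.trans hs.1, hs.2.trans hw⟩).continuousWithinAt.mono
        (Icc_subset_Icc hu hw))
      fun s hs => (hg s ⟨hu.trans hs.1.le, hs.2.le.trans hw⟩).hasDerivAt
        (Icc_mem_nhds (hu.trans_lt hs.1) (hs.2.trans_le hw))
  have hgt : g t ≤ 0 := mul_nonpos_of_nonpos_of_nonneg ht (exp_pos _).le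
  obtain ⟨ξ₁, hξ₁, e₁⟩ := mvt x t le_rfl hxt hty.le
  obtain ⟨ξ₂, hξ₂, e₂⟩ := mvt t y hxt.le hty le_rfl
  refine ⟨⟨ξ₁, hξ₁, ?_⟩, ⟨ξ₂, hξ₂, ?_⟩⟩
  · have : exp (-F ξ₁) * q ξ₁ ≤ 0 := by
      rw [e₁]; exact div_nonpos_of_nonpos_of_nonneg (by simpa [g, hx]) (by linarith)
    exact nonpos_of_mul_nonpos_right this (exp_pos _)
  · have : 0 ≤ exp (-F ξ₂) * q ξ₂ := by
      rw [e₂]; exact div_nonneg (by simpa [g, hy]) (by linarith)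
    exact nonneg_of_mul_nonneg_right this (exp_pos _)

theorem not_down_up_down_of_hasDerivAt_mul_affine {f : ℝ → ℝ} {A B x₀ x₁ x₂ x₃ : ℝ}
    (hf : ∀ x, HasDerivAt f (x * (A * x + B)) x) (h₀ : 0 ≤ x₀) (h₀₁ : x₀ < x₁) (h₁₂ : x₁ < x₂)
    (h₂₃ : x₂ < x₃) : ¬(f x₁ < f x₀ ∧ f x₁ ≤ f x₂ ∧ f x₃ < f x₂) := by
  rintro ⟨hdown, hup, hdown'⟩
  have mvt : ∀ u w, u < w → ∃ ξ ∈ Ioo u w, ξ * (A * ξ + B) = (f w - f u) / (w - u) :=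
    fun u w huw => exists_hasDerivAt_eq_slope f _ huw
      (fun s _ => (hf s).continuousAt.continuousWithinAt) fun s _ => hf s
  obtain ⟨ξ₁, hξ₁, e₁⟩ := mvt x₀ x₁ h₀₁
  obtain ⟨ξ₂, hξ₂, e₂⟩ := mvt x₁ x₂ h₁₂
  obtain ⟨ξ₃, hξ₃, e₃⟩ := mvt x₂ x₃ h₂₃
  have l₁ : A * ξ₁ + B < 0 := by
    refine neg_of_mul_neg_right (e₁ ▸ div_neg_of_neg_of_pos ?_ ?_) (by linarith [hξ₁.1]) <;>
      linarith
  have l₂ : 0 ≤ A * ξ₂ + B := by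
    refine nonneg_of_mul_nonneg_right (e₂ ▸ div_nonneg ?_ ?_) (by linarith [hξ₂.1]) <;> linarith
  have l₃ : A * ξ₃ + B < 0 := by
    refine neg_of_mul_neg_right (e₃ ▸ div_neg_of_neg_of_pos ?_ ?_) (by linarith [hξ₃.1]) <;>
      linarith
  have h₁₂' : 0 < ξ₂ - ξ₁ := sub_pos.2 (hξ₁.2.trans hξ₂.1)
  have h₂₃' : 0 < ξ₃ - ξ₂ := sub_pos.2 (hξ₂.2.trans hξ₃.1)
  have affine : (ξ₃ - ξ₁) * (A * ξ₂ + B) = (ξ₃ - ξ₂) * (A * ξ₁ + B) + (ξ₂ - ξ₁) * (A * ξ₃ + B) := by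
    ring
  linarith [mul_neg_of_pos_of_neg h₂₃' l₁, mul_neg_of_pos_of_neg h₁₂' l₃,
    mul_nonneg (add_pos h₁₂' h₂₃').le l₂]

theorem hasDerivAt_pC (m C γ : ℝ) :
    HasDerivAt (pC m C) (γ * (Acoef m C * γ + Bcoef m C)) γ := by
  refine (((((hasDerivAt_pow 3 γ).const_mul (Acoef m C)).div_const 3).fun_add
    (((hasDerivAt_pow 2 γ).const_mul (Bcoef m C)).div_const 2)).add_const C).congr_deriv ?_
  push_cast
  ring

theorem pC_one {m : ℝ} (hm : 0 < m) (C : ℝ) : pC m C 1 = 2 := by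
  have : m + 1 ≠ 0 := by positivity
  simp only [pC, Acoef, Bcoef]
  field_simp
  ring

theorem pC_add_one {m : ℝ} (hm : 0 < m) (C : ℝ) : pC m C (m + 1) = -2 := by
  have : m + 1 ≠ 0 := by positivity
  simp only [pC, Acoef, Bcoef]
  field_simp
  ring

theorem odeRHS_sub_eq {m C γ : ℝ} {v : ℝ → ℝ} (hγ : 0 < γ) (hv : 0 ≤ v γ) :
    odeRHS m C v γ - 4 * γ =
      2 * √2 / (√(v γ) + √2 * γ) * (v γ - 2 * γ ^ 2) + pC m C γ * γ := by
  have hden : 0 < √(v γ) + √2 * γ := by positivity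
  have h2 : √2 ^ 2 = 2 := sq_sqrt zero_le_two
  have hsq : √(v γ) ^ 2 = v γ := sq_sqrt hv
  rw [odeRHS, div_mul_eq_mul_div, ← sub_eq_iff_eq_add, eq_div_iff hden.ne']
  linear_combination 2 * √2 * hsq + 2 * √(v γ) * γ * h2

/-- If `v` is a `C¹` nonnegative solution of the ODE on `[1, m+1]` satisfying both
boundary conditions `v 1 = 2` and `v (m+1) = 2(m+1)²`, then `v(γ) > 2γ²` on `(1, m+1)`. -/
theorem stmt1 (m : ℝ) (hm : 0 < m) (C : ℝ) (v : ℝ → ℝ)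
    (hsol : IsSolOn m C v (Set.Icc 1 (m + 1)))
    (hbc : v (m + 1) = 2 * (m + 1) ^ 2) :
    ∀ γ ∈ Set.Ioo (1 : ℝ) (m + 1), 2 * γ ^ 2 < v γ := by
  obtain ⟨hv₁, hsol⟩ := hsol
  have hvc : ContinuousOn v (Icc 1 (m + 1)) := fun γ hγ => (hsol γ hγ).2.continuousWithinAt
  have ha : ContinuousOn (fun γ => 2 * √2 / (√(v γ) + √2 * γ)) (Icc 1 (m + 1)) :=
    continuousOn_const.div (hvc.sqrt.add (continuousOn_const.mul continuousOn_id)) fun γ hγ => by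
      have := hγ.1; positivity
  have hlin : ∀ γ ∈ Icc 1 (m + 1), HasDerivWithinAt (fun γ => v γ - 2 * γ ^ 2)
      (2 * √2 / (√(v γ) + √2 * γ) * (v γ - 2 * γ ^ 2) + pC m C γ * γ) (Icc 1 (m + 1)) γ := by
    intro γ hγ
    rw [← odeRHS_sub_eq (by linarith [hγ.1]) (hsol γ hγ).1]
    exact (hsol γ hγ).2.sub
      ((((hasDerivAt_pow 2 γ).const_mul 2).congr_deriv (by push_cast; ring)).hasDerivWithinAt)
  intro γ hγ
  by_contra! hle
  obtain ⟨⟨ξ₁, hξ₁, hq₁⟩, ⟨ξ₂, hξ₂, hq₂⟩⟩ :=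
    exists_forcing_nonpos_nonneg_of_hasDerivWithinAt_linear hγ.1 hγ.2 ha hlin (by simp [hv₁])
      (by simp [hbc]) (by linarith)
  have hp₁ : pC m C ξ₁ ≤ 0 := nonpos_of_mul_nonpos_left hq₁ (by linarith [hξ₁.1])
  have hp₂ : 0 ≤ pC m C ξ₂ := nonneg_of_mul_nonneg_left hq₂ (by linarith [hξ₂.1, hγ.1])
  exact not_down_up_down_of_hasDerivAt_mul_affine (hasDerivAt_pC m C) zero_le_one hξ₁.1
    (hξ₁.2.trans hξ₂.1) hξ₂.2
    ⟨by linarith [pC_one hm C], by linarith, by linarith [pC_add_one hm C]⟩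
end

section
/- For every real m > 0 and C ∈ ℝ there exists a constant K > 0 (depending only on m and C) such that every C¹ nonnegative solution v of the ODE IVP v'(γ) = 2√2·√(v(γ)) + p_C(γ)·γ, v(1) = 2, defined on any subinterval of [1, m+1] containing 1, satisfies 0 ≤ v(γ) ≤ K on its whole interval of definition. -/
open Set Filter

/-- A priori bound: there is `K > 0` (depending only on `m` and `C`) such that every
`C¹` nonnegative solution of the IVP on any subinterval of `[1, m+1]` containing `1`
satisfies `0 ≤ v ≤ K` on its whole interval of definition. -/
theorem stmt2 (m : ℝ) (hm : 0 < m) (C : ℝ) :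
    ∃ K : ℝ, 0 < K ∧
      ∀ S : Set ℝ, S ⊆ Set.Icc 1 (m + 1) → (1 : ℝ) ∈ S → S.OrdConnected →
        ∀ v : ℝ → ℝ, IsSolOn m C v S →
          ∀ γ ∈ S, 0 ≤ v γ ∧ v γ ≤ K := by
  set M : ℝ := (|Acoef m C| * (m+1)^3/3 + |Bcoef m C| * (m+1)^2/2 + |C|) * (m+1) with hMdef
  have hM0 : 0 ≤ M := by positivity
  refine ⟨(M + 4) * Real.exp m, by positivity, ?_⟩
  intro S hS h1S hOC v hv γ hγ
  obtain ⟨hv1, hprop⟩ := hv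
  have hexp1 : (1:ℝ) ≤ Real.exp m := Real.one_le_exp hm.le
  refine ⟨(hprop γ hγ).1, ?_⟩
  rcases eq_or_lt_of_le (hS hγ).1 with h1 | h1
  · rw [← h1, hv1]; nlinarith
  · have hIcc : Icc 1 γ ⊆ S := hOC.out h1S hγ
    have hcont : ContinuousOn v (Icc 1 γ) := fun t ht =>
      ((hprop t (hIcc ht)).2.continuousWithinAt).mono hIcc
    have hderiv : ∀ t ∈ Ico 1 γ, HasDerivWithinAt v (odeRHS m C v t) (Ici t) t := by
      intro t ht
      have h2 : HasDerivWithinAt v (odeRHS m C v t) (Icc t γ) t :=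
        ((hprop t (hIcc ⟨ht.1, ht.2.le⟩)).2).mono
          (fun x hx => hIcc ⟨le_trans ht.1 hx.1, hx.2⟩)
      exact h2.mono_of_mem_nhdsWithin (Icc_mem_nhdsGE_of_mem ⟨le_refl t, ht.2⟩)
    have hbound : ∀ t ∈ Ico 1 γ, ‖odeRHS m C v t‖ ≤ 1 * ‖v t‖ + (M + 2) := by
      intro t ht
      have htS := hIcc ⟨ht.1, ht.2.le⟩
      have hv0 := (hprop t htS).1
      have ht1 : (1:ℝ) ≤ t := ht.1
      have htm : t ≤ m + 1 := (hS htS).2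
      have ht0 : (0:ℝ) ≤ t := by linarith
      have hsq : Real.sqrt (v t) ^ 2 = v t := Real.sq_sqrt hv0
      have h2s : Real.sqrt 2 ^ 2 = 2 := Real.sq_sqrt (by norm_num)
      have hsqrt : 2 * Real.sqrt 2 * Real.sqrt (v t) ≤ v t + 2 := by
        nlinarith [sq_nonneg (Real.sqrt (v t) - Real.sqrt 2)]
      have ht3 : t^3 ≤ (m+1)^3 := pow_le_pow_left₀ ht0 htm 3
      have ht2 : t^2 ≤ (m+1)^2 := pow_le_pow_left₀ ht0 htm 2
      have hAabs : |Acoef m C * t^3/3| = |Acoef m C| * t^3/3 := by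
        rw [abs_div, abs_mul, abs_of_nonneg (by positivity : (0:ℝ) ≤ t^3)]; norm_num
      have hBabs : |Bcoef m C * t^2/2| = |Bcoef m C| * t^2/2 := by
        rw [abs_div, abs_mul, abs_of_nonneg (by positivity : (0:ℝ) ≤ t^2)]; norm_num
      have hpC : |pC m C t| ≤ |Acoef m C| * (m+1)^3/3 + |Bcoef m C| * (m+1)^2/2 + |C| := by
        unfold pC
        calc |Acoef m C * t^3/3 + Bcoef m C * t^2/2 + C|
            ≤ |Acoef m C * t^3/3 + Bcoef m C * t^2/2| + |C| := abs_add_le _ _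
          _ ≤ |Acoef m C * t^3/3| + |Bcoef m C * t^2/2| + |C| := by
              linarith [abs_add_le (Acoef m C * t^3/3) (Bcoef m C * t^2/2)]
          _ ≤ _ := by
              rw [hAabs, hBabs]
              have hA0 : (0:ℝ) ≤ |Acoef m C| := abs_nonneg _
              have hB0 : (0:ℝ) ≤ |Bcoef m C| := abs_nonneg _
              nlinarith
      have hp : |pC m C t * t| ≤ M := by
        rw [abs_mul, abs_of_nonneg ht0, hMdef]
        have h0 : (0:ℝ) ≤ |pC m C t| := abs_nonneg _
        nlinarith
      rw [Real.norm_eq_abs, Real.norm_eq_abs, abs_of_nonneg hv0]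
      have habs : |odeRHS m C v t| ≤ 2 * Real.sqrt 2 * Real.sqrt (v t) + |pC m C t * t| := by
        unfold odeRHS
        refine (abs_add_le _ _).trans ?_
        have : |2 * Real.sqrt 2 * Real.sqrt (v t)| = 2 * Real.sqrt 2 * Real.sqrt (v t) := by
          exact abs_of_nonneg (by positivity)
        rw [this]
      linarith
    have key := norm_le_gronwallBound_of_norm_deriv_right_le (δ := 2) hcont hderiv
      (by rw [hv1, Real.norm_eq_abs]; norm_num) hbound γ (right_mem_Icc.2 h1.le)
    rw [Real.norm_eq_abs, abs_of_nonneg (hprop γ hγ).1] at key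
    have hgb : gronwallBound 2 1 (M+2) (γ - 1)
        = 2 * Real.exp (1 * (γ-1)) + (M+2)/1 * (Real.exp (1 * (γ-1)) - 1) := by
      rw [gronwallBound_of_K_ne_0 one_ne_zero]
    rw [hgb] at key
    have hγm : γ - 1 ≤ m := by linarith [(hS hγ).2]
    have hexp : Real.exp (1 * (γ - 1)) ≤ Real.exp m := by
      rw [one_mul]; exact Real.exp_le_exp.2 hγm
    have hexp0 : (1:ℝ) ≤ Real.exp (1 * (γ - 1)) := by
      rw [one_mul]; exact Real.one_le_exp (by linarith)
    calc v γ ≤ 2 * Real.exp (1 * (γ-1)) + (M+2)/1 * (Real.exp (1 * (γ-1)) - 1) := key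
      _ ≤ (M + 4) * Real.exp m := by nlinarith
end

section
/- Fix m > 0. If (Cₙ) is a sequence of real numbers converging to C₀ ∈ ℝ, then there exists a subsequence (C_{n_k}) such that the corresponding functions u_{C_{n_k}} converge uniformly on [1, m+1] to u_{C₀}. -/
open Set Filter

/-- `u` is the extended solution `u_C : [1, m+1] → ℝ` associated to the parameter `C`:
either the solution `v_C` exists on all of `[1, m+1]` and `u = v_C`, or the maximal
interval of existence of `v_C` is `[1, γ⋆) ⊊ [1, m+1]` and `u` equals `v_C` there and
`0` outside of it. -/
def IsExtSol (m C : ℝ) (u : ℝ → ℝ) : Prop :=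
  IsSolOn m C u (Set.Icc 1 (m + 1)) ∨
    ∃ r ∈ Set.Ioc (1 : ℝ) (m + 1),
      IsMaxSolOn m C u (Set.Ico 1 r) ∧ ∀ γ, γ ∉ Set.Ico (1 : ℝ) r → u γ = 0

open Topology

/-!
Every extended solution is a genuine solution on all of `[1, m+1]`: on `[1, r)` a solution grows
at most exponentially (Grönwall), so its derivative is bounded and it extends to `[1, r]`; hence
no maximal interval of existence is half open. Such a solution is positive on `[1, m+1)`: at an
interior zero the derivative `p_C(γ)γ` would vanish, and since the Wronskian of `p_C` and
`∂p_C/∂C` is positive while `∂p_C/∂C < 0` there, `p_C` has negative slope at its zero, so it is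
positive just to the left and `v` would increase into its zero.

Where `u_{C₀} ≥ δ > 0`, the square root is `δ^{-1/2}`-Lipschitz at `u_{C₀}`, and Grönwall bounds
`|u_{Cₙ} - u_{C₀}|` by a multiple of `sup |p_{Cₙ}γ - p_{C₀}γ| → 0`. This settles the case
`u_{C₀}(m+1) > 0`. If `u_{C₀}(m+1) = 0`, it covers `[1, b]` for `b` near `m+1`, and on `[b, m+1]`
both functions stay small: `p_C(m+1) = -2`, so `v' < 0` whenever `v` is small, and `u_{Cₙ}`
cannot cross a small constant barrier. The whole sequence converges.
-/

lemma abs_sqrt_sub_sqrt_le (a : ℝ) {b : ℝ} (hb : 0 < b) : |√a - √b| ≤ |a - b| / √b := by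
  rw [le_div_iff₀ (Real.sqrt_pos.2 hb)]
  rcases le_or_gt 0 a with ha | ha
  · have hprod : (√a - √b) * (√a + √b) = a - b := by
      rw [mul_comm, ← sq_sub_sq, Real.sq_sqrt ha, Real.sq_sqrt hb.le]
    calc |√a - √b| * √b ≤ |√a - √b| * (√a + √b) := by
          gcongr; exact le_add_of_nonneg_left (Real.sqrt_nonneg a)
      _ = |a - b| := by rw [← hprod, abs_mul, abs_of_nonneg (by positivity : 0 ≤ √a + √b)]
  · rw [Real.sqrt_eq_zero'.2 ha.le, zero_sub, abs_neg, abs_of_nonneg (Real.sqrt_nonneg b),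
      Real.mul_self_sqrt hb.le, abs_of_neg (by linarith)]
    linarith

section SqrtODE

variable {k a b : ℝ}

lemma le_of_sqrt_ode_barrier {u g : ℝ → ℝ} {c : ℝ} (hu : ContinuousOn u (Icc a b))
    (hu' : ∀ x ∈ Ico a b, HasDerivWithinAt u (k * √(u x) + g x) (Ici x) x) (ha : u a ≤ c)
    (hg : ∀ x ∈ Ico a b, k * √c + g x < 0) : ∀ x ∈ Icc a b, u x ≤ c :=
  fun _ hx => image_le_of_deriv_right_lt_deriv_boundary hu hu' ha (fun _ => hasDerivAt_const _ c)
    (fun x hx hux => by rw [hux]; exact hg x hx) hx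

lemma abs_sub_le_gronwallBound_of_sqrt_ode {u v g h : ℝ → ℝ} {δ η : ℝ} (hδ : 0 < δ)
    (hu : ContinuousOn u (Icc a b))
    (hu' : ∀ x ∈ Ico a b, HasDerivWithinAt u (k * √(u x) + g x) (Ici x) x)
    (hv : ContinuousOn v (Icc a b))
    (hv' : ∀ x ∈ Ico a b, HasDerivWithinAt v (k * √(v x) + h x) (Ici x) x)
    (ha : u a = v a) (hvδ : ∀ x ∈ Icc a b, δ ≤ v x) (hgh : ∀ x ∈ Ico a b, |g x - h x| ≤ η) :
    ∀ x ∈ Icc a b, |u x - v x| ≤ gronwallBound 0 (|k| / √δ) η (x - a) := by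
  refine norm_le_gronwallBound_of_norm_deriv_right_le (hu.sub hv)
    (fun x hx => (hu' x hx).sub (hv' x hx)) (by simp [ha]) fun x hx => ?_
  have hvx : δ ≤ v x := hvδ x (Ico_subset_Icc_self hx)
  have hsqrt : |√(u x) - √(v x)| ≤ |u x - v x| / √δ :=
    (abs_sqrt_sub_sqrt_le _ (hδ.trans_le hvx)).trans
      (div_le_div_of_nonneg_left (abs_nonneg _) (Real.sqrt_pos.2 hδ) (Real.sqrt_le_sqrt hvx))
  simp only [Real.norm_eq_abs]
  calc |k * √(u x) + g x - (k * √(v x) + h x)|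
      = |k * (√(u x) - √(v x)) + (g x - h x)| := by congr 1; ring
    _ ≤ |k| * |√(u x) - √(v x)| + |g x - h x| := by
        rw [← abs_mul]; exact abs_add_le _ _
    _ ≤ |k| * (|u x - v x| / √δ) + η := by gcongr; exact hgh x hx
    _ = |k| / √δ * |u x - v x| + η := by ring

lemma tendstoUniformlyOn_of_sqrt_ode {ι : Type*} {l : Filter ι} {u g : ι → ℝ → ℝ}
    {v h : ℝ → ℝ} (hu : ∀ i, ContinuousOn (u i) (Icc a b))
    (hu' : ∀ i, ∀ x ∈ Ico a b, HasDerivWithinAt (u i) (k * √(u i x) + g i x) (Ici x) x)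
    (hv : ContinuousOn v (Icc a b))
    (hv' : ∀ x ∈ Ico a b, HasDerivWithinAt v (k * √(v x) + h x) (Ici x) x)
    (ha : ∀ i, u i a = v a) (hv_pos : ∀ x ∈ Icc a b, 0 < v x)
    (hg : TendstoUniformlyOn g h l (Ico a b)) : TendstoUniformlyOn u v l (Icc a b) := by
  obtain ⟨δ, hδ, hvδ⟩ := isCompact_Icc.exists_forall_le' hv hv_pos
  set K := |k| / √δ
  have hK : 0 ≤ K := by positivity
  rw [Metric.tendstoUniformlyOn_iff]
  intro ε hε
  have hlim : Tendsto (fun η => gronwallBound 0 K η (b - a)) (𝓝[>] 0) (𝓝 0) := by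
    simpa [gronwallBound_ε0_δ0] using
      ((gronwallBound_continuous_ε 0 K (b - a)).tendsto 0).mono_left nhdsWithin_le_nhds
  obtain ⟨η, hηε, hη⟩ :=
    ((hlim.eventually (gt_mem_nhds hε)).and self_mem_nhdsWithin).exists
  filter_upwards [Metric.tendstoUniformlyOn_iff.1 hg η hη] with i hi x hx
  have hgh : ∀ y ∈ Ico a b, |g i y - h y| ≤ η := fun y hy => by
    rw [abs_sub_comm]; exact (hi y hy).le
  rw [Real.dist_eq, abs_sub_comm]
  calc |u i x - v x| ≤ gronwallBound 0 K η (x - a) :=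
        abs_sub_le_gronwallBound_of_sqrt_ode hδ (hu i) (hu' i) hv hv' (ha i) hvδ hgh x hx
    _ ≤ gronwallBound 0 K η (b - a) :=
        gronwallBound_mono le_rfl (le_of_lt hη) hK (by linarith [hx.2])
    _ < ε := hηε

lemma exists_abs_le_of_sqrt_ode {v g : ℝ → ℝ} {G : ℝ}
    (hv : ∀ x ∈ Ico a b, HasDerivWithinAt v (k * √(v x) + g x) (Ico a b) x)
    (hg : ∀ x ∈ Ico a b, |g x| ≤ G) : ∃ R, ∀ x ∈ Ico a b, |v x| ≤ R := by
  refine ⟨gronwallBound |v a| |k| (|k| + |G|) (b - a), fun x hx => ?_⟩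
  have hsub : Icc a x ⊆ Ico a b := Icc_subset_Ico_right hx.2
  have hbound : ∀ y ∈ Ico a x, ‖k * √(v y) + g y‖ ≤ |k| * ‖v y‖ + (|k| + |G|) := by
    intro y hy
    have hsqrt : √(v y) ≤ |v y| + 1 := (Real.sqrt_le_left (by positivity)).2 (by
      nlinarith [le_abs_self (v y), abs_nonneg (v y)])
    have hgy : |g y| ≤ |G| := (hg y (hsub (Ico_subset_Icc_self hy))).trans (le_abs_self G)
    simp only [Real.norm_eq_abs]
    calc |k * √(v y) + g y| ≤ |k| * √(v y) + |g y| := by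
          simpa only [abs_mul, abs_of_nonneg (Real.sqrt_nonneg (v y))] using
            abs_add_le (k * √(v y)) (g y)
      _ ≤ |k| * (|v y| + 1) + |G| := by gcongr
      _ = |k| * |v y| + (|k| + |G|) := by ring
  calc |v x| ≤ gronwallBound |v a| |k| (|k| + |G|) (x - a) :=
        norm_le_gronwallBound_of_norm_deriv_right_le
          (fun y hy => (hv y (hsub hy)).continuousWithinAt.mono hsub)
          (fun y hy => (hv y (hsub (Ico_subset_Icc_self hy))).mono_of_mem_nhdsWithin
            (mem_of_superset (Ico_mem_nhdsGE (hy.2.trans_le hx.2.le))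
              (Ico_subset_Ico_left hy.1)))
          le_rfl hbound x (right_mem_Icc.2 hx.1)
    _ ≤ _ := gronwallBound_mono (abs_nonneg _) (by positivity) (abs_nonneg _) (by linarith [hx.2])

end SqrtODE

lemma exists_extension_Icc_of_ode {F : ℝ → ℝ → ℝ} (hF : Continuous (Function.uncurry F))
    {v : ℝ → ℝ} {a b R : ℝ} (hab : a < b)
    (hv : ∀ x ∈ Ico a b, HasDerivWithinAt v (F x (v x)) (Ico a b) x)
    (hR : ∀ x ∈ Ico a b, |v x| ≤ R) :
    ∃ w : ℝ → ℝ, EqOn w v (Ico a b) ∧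
      ∀ x ∈ Icc a b, HasDerivWithinAt w (F x (w x)) (Icc a b) x := by
  obtain ⟨K, hK⟩ := IsCompact.exists_bound_of_continuousOn
    (isCompact_Icc.prod (isCompact_Icc (a := -R) (b := R))) hF.continuousOn
  have hlip : LipschitzOnWith (Real.toNNReal K) v (Ico a b) :=
    (convex_Ico a b).lipschitzOnWith_of_nnnorm_hasDerivWithin_le hv fun x hx => by
      rw [← NNReal.coe_le_coe, coe_nnnorm, Real.coe_toNNReal']
      exact (hK (x, v x) ⟨Ico_subset_Icc_self hx, abs_le.1 (hR x hx)⟩).trans (le_max_left _ _)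
  obtain ⟨w, hw_lip, hwv⟩ := hlip.extend_real
  have hIco : ∀ x ∈ Ico a b, Ico a b ∈ 𝓝[Icc a b] x := fun x hx =>
    mem_nhdsWithin.2 ⟨Iio b, isOpen_Iio, hx.2, fun y hy => ⟨hy.2.1, hy.1⟩⟩
  have hw_Ico : ∀ x ∈ Ico a b, HasDerivWithinAt w (F x (w x)) (Icc a b) x := fun x hx => by
    rw [← hwv hx]
    exact ((hv x hx).mono_of_mem_nhdsWithin (hIco x hx)).congr_of_eventuallyEq_of_mem
      (eventually_of_mem (hIco x hx) fun y hy => (hwv hy).symm) (Ico_subset_Icc_self hx)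
  refine ⟨w, hwv.symm, fun x hx => ?_⟩
  rcases hx.2.lt_or_eq with hxb | rfl
  · exact hw_Ico x ⟨hx.1, hxb⟩
  have hderiv : ∀ y ∈ Ioo a x, HasDerivAt w (F y (w y)) y := fun y hy =>
    (hw_Ico y (Ioo_subset_Ico_self hy)).hasDerivAt (Icc_mem_nhds hy.1 hy.2)
  refine (hasDerivWithinAt_Iic_of_tendsto_deriv (s := Ioo a x)
    (fun y hy => (hderiv y hy).differentiableAt.differentiableWithinAt)
    hw_lip.continuous.continuousWithinAt (Ioo_mem_nhdsLT hab) ?_).mono Icc_subset_Iic_self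
  have hcont : Continuous fun y => F y (w y) :=
    hF.comp (continuous_id.prodMk hw_lip.continuous)
  refine (hcont.continuousAt.tendsto.mono_left nhdsWithin_le_nhds).congr' ?_
  filter_upwards [Ioo_mem_nhdsLT hab] with y hy using (hderiv y hy).deriv.symm

lemma ContinuousWithinAt.exists_forall_Icc_lt {f : ℝ → ℝ} {a e c : ℝ} (hae : a < e)
    (hf : ContinuousWithinAt f (Icc a e) e) (hfe : f e < c) :
    ∃ b ∈ Ico a e, ∀ x ∈ Icc b e, f x < c := by
  have h := hf.eventually_lt_const hfe
  rw [nhdsWithin_Icc_eq_nhdsLE hae] at h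
  obtain ⟨l, hl, hsub⟩ := mem_nhdsLE_iff_exists_Ioc_subset.1 h
  refine ⟨max a ((l + e) / 2), ⟨le_max_left _ _, max_lt hae (by linarith [mem_Iio.1 hl])⟩,
    fun x hx => hsub ⟨?_, hx.2⟩⟩
  linarith [le_max_right a ((l + e) / 2), hx.1, mem_Iio.1 hl]

-- `qC m = ∂p_C/∂C` (`p_C` is affine in `C`); `pCDeriv`, `qCDeriv` are the `γ`-derivatives.
noncomputable def qC (m γ : ℝ) : ℝ :=
  (1 - 1 / (m + 1) ^ 2) / m * γ ^ 3 - (1 + 1 / m - 1 / (m * (m + 1) ^ 2)) * γ ^ 2 + 1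

noncomputable def pCDeriv (m C γ : ℝ) : ℝ := Acoef m C * γ ^ 2 + Bcoef m C * γ

noncomputable def qCDeriv (m γ : ℝ) : ℝ :=
  3 * (1 - 1 / (m + 1) ^ 2) / m * γ ^ 2 - 2 * (1 + 1 / m - 1 / (m * (m + 1) ^ 2)) * γ

section Polynomial

@[fun_prop]
lemma continuous_pC (m C : ℝ) : Continuous (pC m C) := by
  unfold pC; fun_prop

lemma tendstoUniformlyOn_pC_mul_self (m : ℝ) {Cseq : ℕ → ℝ} {C₀ : ℝ}
    (hC : Tendsto Cseq atTop (𝓝 C₀)) (a b : ℝ) :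
    TendstoUniformlyOn (fun n γ => pC m (Cseq n) γ * γ) (fun γ => pC m C₀ γ * γ) atTop
      (Icc a b) := by
  rw [tendstoUniformlyOn_iff_tendstoUniformly_comp_coe]
  have := Continuous.tendstoUniformly (fun C (γ : Icc a b) => pC m C γ * γ)
    (by unfold pC Acoef Bcoef; fun_prop) C₀
  exact fun s hs => hC.eventually (this s hs)

lemma hasDerivAt_pC_mul_self (m C γ : ℝ) :
    HasDerivAt (fun x => pC m C x * x) (pCDeriv m C γ * γ + pC m C γ) γ := by
  have h := (((((hasDerivAt_pow 3 γ).const_mul (Acoef m C)).div_const 3).add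
    (((hasDerivAt_pow 2 γ).const_mul (Bcoef m C)).div_const 2)).add_const C).mul (hasDerivAt_id γ)
  refine h.congr_deriv ?_
  simp only [pCDeriv, pC, id, Pi.add_apply]
  push_cast
  ring

variable {m : ℝ}

lemma pC_eq_neg_two (hm : 0 < m) (C : ℝ) : pC m C (m + 1) = -2 := by
  unfold pC Acoef Bcoef
  field_simp
  ring

lemma qC_neg (hm : 0 < m) {γ : ℝ} (hγ : γ ∈ Ioo 1 (m + 1)) : qC m γ < 0 := by
  have hfactor :
      qC m γ = (γ - 1) * (γ - (m + 1)) * ((1 - 1 / (m + 1) ^ 2) / m * γ + 1 / (m + 1)) := by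
    unfold qC
    field_simp
    ring
  have hcoef : 0 < 1 - 1 / (m + 1) ^ 2 := by
    rw [sub_pos, div_lt_one (by positivity)]
    nlinarith
  rw [hfactor]
  have := hγ.1
  exact mul_neg_of_neg_of_pos (mul_neg_of_pos_of_neg (by linarith) (by linarith [hγ.2]))
    (by positivity)

/-- The Wronskian of `p_C` and `qC`. -/
lemma pCDeriv_mul_qC_sub (hm : 0 < m) (C γ : ℝ) :
    pCDeriv m C γ * qC m γ - pC m C γ * qCDeriv m γ =
      2 * γ / (m * (m + 1) ^ 2) *
        ((γ - (m + 1)) ^ 2 * (γ + 2 * (m + 1)) + (γ - 1) ^ 2 * (γ + 2)) := by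
  unfold pCDeriv qC pC qCDeriv Acoef Bcoef
  field_simp
  ring

lemma pCDeriv_neg_of_pC_eq_zero (hm : 0 < m) {C γ : ℝ} (hγ : γ ∈ Ioo 1 (m + 1))
    (hp : pC m C γ = 0) : pCDeriv m C γ < 0 := by
  have hW := pCDeriv_mul_qC_sub hm C γ
  rw [hp, zero_mul, sub_zero] at hW
  have := hγ.1
  have hWpos : 0 < pCDeriv m C γ * qC m γ := by
    rw [hW]
    have : 0 < (γ - 1) ^ 2 * (γ + 2) := by
      have : 0 < (γ - 1) ^ 2 := by nlinarith
      positivity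
    positivity
  exact neg_of_mul_pos_left hWpos (qC_neg hm hγ).le

lemma eventually_pC_mul_self_pos_left (hm : 0 < m) {C γ : ℝ} (hγ : γ ∈ Ioo 1 (m + 1))
    (hp : pC m C γ = 0) : ∀ᶠ x in 𝓝[<] γ, 0 < pC m C x * x := by
  have hderiv := hasDerivAt_pC_mul_self m C γ
  rw [hp, add_zero] at hderiv
  have hneg : deriv (fun x => pC m C x * x) γ < 0 := by
    rw [hderiv.deriv]
    exact mul_neg_of_neg_of_pos (pCDeriv_neg_of_pC_eq_zero hm hγ hp) (by linarith [hγ.1])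
  filter_upwards [nhdsWithin_le_nhds (eventually_nhdsWithin_sign_eq_of_deriv_neg hneg
    (by simp [hp])), self_mem_nhdsWithin] with x hsign hx
  rw [sign_pos (sub_pos.2 hx)] at hsign
  exact sign_eq_one_iff.1 hsign

end Polynomial

section Solutions

variable {m C : ℝ} {v : ℝ → ℝ}

lemma IsSolOn.continuousOn {S : Set ℝ} (hv : IsSolOn m C v S) : ContinuousOn v S :=
  fun x hx => (hv.2 x hx).2.continuousWithinAt

lemma IsSolOn.hasDerivWithinAt_Ici (hv : IsSolOn m C v (Icc 1 (m + 1))) {x : ℝ}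
    (hx : x ∈ Ico 1 (m + 1)) : HasDerivWithinAt v (odeRHS m C v x) (Ici x) x :=
  (hv.2 x (Ico_subset_Icc_self hx)).2.mono_of_mem_nhdsWithin
    (mem_of_superset (Icc_mem_nhdsGE hx.2) (Icc_subset_Icc_left hx.1))

lemma IsSolOn.pos (hm : 0 < m) (hv : IsSolOn m C v (Icc 1 (m + 1))) {γ : ℝ}
    (hγ : γ ∈ Ico 1 (m + 1)) : 0 < v γ := by
  rcases hγ.1.eq_or_lt with rfl | hγ1
  · rw [hv.1]; norm_num
  refine (hv.2 γ (Ico_subset_Icc_self hγ)).1.lt_of_ne' fun hzero => ?_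
  have hmem : Icc 1 (m + 1) ∈ 𝓝 γ := Icc_mem_nhds hγ1 hγ.2
  have hmin : IsLocalMin v γ := by
    filter_upwards [hmem] with x hx
    rw [hzero]; exact (hv.2 x hx).1
  have hp : pC m C γ = 0 := by
    have h := hmin.hasDerivAt_eq_zero ((hv.2 γ (Ico_subset_Icc_self hγ)).2.hasDerivAt hmem)
    simp only [odeRHS, hzero, Real.sqrt_zero, mul_zero, zero_add, mul_eq_zero] at h
    exact h.resolve_right (by linarith)
  -- `v` would increase into its zero from the left
  obtain ⟨c, hcγ, hc⟩ := (nhdsLT_basis γ).eventually_iff.1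
    ((eventually_pC_mul_self_pos_left hm ⟨hγ1, hγ.2⟩ hp).and (Ioo_mem_nhdsLT hγ1))
  set c' := max c 1
  have hsub : Icc c' γ ⊆ Icc 1 (m + 1) := Icc_subset_Icc (le_max_right c 1) hγ.2.le
  have hc'γ : c' < γ := max_lt hcγ hγ1
  have hmono : StrictMonoOn v (Icc c' γ) := by
    refine strictMonoOn_of_hasDerivWithinAt_pos (convex_Icc c' γ) (hv.continuousOn.mono hsub)
      (f' := fun x => odeRHS m C v x)
      (fun x hx => (hv.2 x (hsub (interior_subset hx))).2.mono (interior_subset.trans hsub))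
      fun x hx => ?_
    rw [interior_Icc] at hx
    have hx' := (hc ⟨(le_max_left c 1).trans_lt hx.1, hx.2⟩).1
    have := Real.sqrt_nonneg (v x)
    simp only [odeRHS]
    positivity
  have := hmono ⟨le_rfl, hc'γ.le⟩ ⟨hc'γ.le, le_rfl⟩ hc'γ
  linarith [(hv.2 c' (hsub ⟨le_rfl, hc'γ.le⟩)).1]

lemma not_isMaxSolOn_Ico {r : ℝ} (hr : r ∈ Ioc 1 (m + 1)) : ¬IsMaxSolOn m C v (Ico 1 r) := by
  rintro ⟨⟨hv1, hsol⟩, hmax⟩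
  have hderiv : ∀ x ∈ Ico 1 r, HasDerivWithinAt v (2 * √2 * √(v x) + pC m C x * x) (Ico 1 r) x :=
    fun x hx => (hsol x hx).2
  obtain ⟨G, hG⟩ := (isCompact_Icc (a := 1) (b := r)).exists_bound_of_continuousOn
    (f := fun x => pC m C x * x) (by fun_prop)
  obtain ⟨R, hR⟩ := exists_abs_le_of_sqrt_ode hderiv fun x hx => hG x (Ico_subset_Icc_self hx)
  obtain ⟨w, hwv, hw⟩ := exists_extension_Icc_of_ode
    (F := fun x y => 2 * √2 * √y + pC m C x * x) (by fun_prop) hr.1 hderiv hR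
  have hwr : 0 ≤ w r := by
    have hlim : Tendsto w (𝓝[<] r) (𝓝 (w r)) :=
      ((hw r (right_mem_Icc.2 hr.1.le)).continuousWithinAt.mono Ioo_subset_Icc_self).mono_left
        (nhdsWithin_Ioo_eq_nhdsLT hr.1).ge
    refine ge_of_tendsto hlim ?_
    filter_upwards [Ioo_mem_nhdsLT hr.1] with x hx
    rw [hwv (Ioo_subset_Ico_self hx)]
    exact (hsol x (Ioo_subset_Ico_self hx)).1
  refine hmax (Icc 1 r) (Icc_subset_Icc_right hr.2) ordConnected_Icc Ico_subset_Icc_self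
    (fun h => (h.symm ▸ right_mem_Icc.2 hr.1.le : r ∈ Ico 1 r).2.false)
    ⟨w, ⟨(hwv (left_mem_Ico.2 hr.1)).trans hv1, fun x hx => ⟨?_, hw x hx⟩⟩, hwv⟩
  rcases hx.2.lt_or_eq with hxr | rfl
  · rw [hwv ⟨hx.1, hxr⟩]; exact (hsol x ⟨hx.1, hxr⟩).1
  · exact hwr

lemma IsExtSol.isSolOn (hu : IsExtSol m C v) : IsSolOn m C v (Icc 1 (m + 1)) :=
  hu.resolve_right fun ⟨_, hr, hmax, _⟩ => not_isMaxSolOn_Ico hr hmax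

end Solutions

section Convergence

variable {m : ℝ} {Cseq : ℕ → ℝ} {C₀ : ℝ} {u : ℕ → ℝ → ℝ} {u₀ : ℝ → ℝ}

lemma tendstoUniformlyOn_Icc_of_pos (hC : Tendsto Cseq atTop (𝓝 C₀))
    (hu : ∀ n, IsSolOn m (Cseq n) (u n) (Icc 1 (m + 1))) (hu₀ : IsSolOn m C₀ u₀ (Icc 1 (m + 1)))
    {b : ℝ} (hb : b ≤ m + 1) (hpos : ∀ x ∈ Icc 1 b, 0 < u₀ x) :
    TendstoUniformlyOn u u₀ atTop (Icc 1 b) := by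
  have hsub : Icc 1 b ⊆ Icc 1 (m + 1) := Icc_subset_Icc_right hb
  have hsub' : Ico 1 b ⊆ Ico 1 (m + 1) := Ico_subset_Ico_right hb
  exact tendstoUniformlyOn_of_sqrt_ode (k := 2 * √2)
    (fun n => (hu n).continuousOn.mono hsub)
    (fun n x hx => (hu n).hasDerivWithinAt_Ici (hsub' hx))
    (hu₀.continuousOn.mono hsub) (fun x hx => hu₀.hasDerivWithinAt_Ici (hsub' hx))
    (fun n => (hu n).1.trans hu₀.1.symm) hpos
    ((tendstoUniformlyOn_pC_mul_self m hC 1 b).mono Ico_subset_Icc_self)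

lemma IsSolOn.exists_Icc_lt_of_eq_zero (hm : 0 < m) (hu₀ : IsSolOn m C₀ u₀ (Icc 1 (m + 1)))
    (hzero : u₀ (m + 1) = 0) {η : ℝ} (hη : 0 < η) :
    ∃ b ∈ Ico 1 (m + 1), ∀ x ∈ Icc b (m + 1), u₀ x < η ∧ pC m C₀ x * x < -1 := by
  have hm1 : 1 < m + 1 := by linarith
  obtain ⟨b₁, hb₁, hu₀_lt⟩ := ContinuousWithinAt.exists_forall_Icc_lt hm1
    (hu₀.continuousOn _ (right_mem_Icc.2 hm1.le)) (hzero.trans_lt hη)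
  obtain ⟨b₂, hb₂, hg₀_lt⟩ := ContinuousWithinAt.exists_forall_Icc_lt hm1
    (by fun_prop : Continuous fun γ => pC m C₀ γ * γ).continuousWithinAt
    (show pC m C₀ (m + 1) * (m + 1) < -1 by rw [pC_eq_neg_two hm]; linarith)
  refine ⟨max b₁ b₂, ⟨hb₁.1.trans (le_max_left _ _), max_lt hb₁.2 hb₂.2⟩, fun x hx => ?_⟩
  exact ⟨hu₀_lt x ⟨(le_max_left _ _).trans hx.1, hx.2⟩,
    hg₀_lt x ⟨(le_max_right _ _).trans hx.1, hx.2⟩⟩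

lemma tendstoUniformlyOn_of_eq_zero (hm : 0 < m) (hC : Tendsto Cseq atTop (𝓝 C₀))
    (hu : ∀ n, IsSolOn m (Cseq n) (u n) (Icc 1 (m + 1))) (hu₀ : IsSolOn m C₀ u₀ (Icc 1 (m + 1)))
    (hzero : u₀ (m + 1) = 0) : TendstoUniformlyOn u u₀ atTop (Icc 1 (m + 1)) := by
  rw [Metric.tendstoUniformlyOn_iff]
  intro ε hε
  set η := min (ε / 3) (1 / 100)
  have hη : 0 < η := by positivity
  have hbarrier : 2 * √2 * √(2 * η) < 1 / 2 := by
    rw [mul_assoc, ← Real.sqrt_mul zero_le_two]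
    have : √(2 * (2 * η)) < 1 / 4 := by
      rw [Real.sqrt_lt' (by norm_num)]
      linarith [min_le_right (ε / 3) (1 / 100)]
    linarith
  obtain ⟨b, hb, htail₀⟩ := hu₀.exists_Icc_lt_of_eq_zero hm hzero hη
  have hhead := Metric.tendstoUniformlyOn_iff.1
    (tendstoUniformlyOn_Icc_of_pos hC hu hu₀ hb.2.le
      fun x hx => hu₀.pos hm ⟨hx.1, hx.2.trans_lt hb.2⟩) η hη
  have hg := Metric.tendstoUniformlyOn_iff.1 (tendstoUniformlyOn_pC_mul_self m hC 1 (m + 1))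
    (1 / 2) (by norm_num)
  filter_upwards [hhead, hg] with n hn hgn x hx
  rcases le_or_gt x b with hxb | hbx
  · exact (hn x ⟨hx.1, hxb⟩).trans_le ((min_le_left _ _).trans (by linarith))
  have hsub : Icc b (m + 1) ⊆ Icc 1 (m + 1) := Icc_subset_Icc_left hb.1
  have htail : ∀ y ∈ Icc b (m + 1), u n y ≤ 2 * η := by
    refine le_of_sqrt_ode_barrier (k := 2 * √2) (g := fun γ => pC m (Cseq n) γ * γ)
      ((hu n).continuousOn.mono hsub)
      (fun y hy => (hu n).hasDerivWithinAt_Ici ⟨hb.1.trans hy.1, hy.2⟩) ?_ fun y hy => ?_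
    · have := hn b ⟨hb.1, le_rfl⟩
      rw [Real.dist_eq, abs_lt] at this
      linarith [(htail₀ b ⟨le_rfl, hb.2.le⟩).1]
    · have := hgn y (hsub (Ico_subset_Icc_self hy))
      rw [Real.dist_eq, abs_lt] at this
      linarith [(htail₀ y (Ico_subset_Icc_self hy)).2]
  have hxtail : x ∈ Icc b (m + 1) := ⟨hbx.le, hx.2⟩
  rw [Real.dist_eq, abs_lt]
  constructor <;> linarith [htail x hxtail, (htail₀ x hxtail).1, ((hu n).2 x hx).1,
    (hu₀.2 x hx).1, min_le_left (ε / 3) (1 / 100)]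

end Convergence

/-- Theorem 3.1.11: if `Cₙ → C₀`, then some subsequence of the extended solutions
`u_{Cₙ}` converges uniformly on `[1, m+1]` to `u_{C₀}`. -/
theorem stmt8 (m : ℝ) (hm : 0 < m)
    (Cseq : ℕ → ℝ) (C₀ : ℝ) (hC : Filter.Tendsto Cseq Filter.atTop (nhds C₀))
    (u : ℕ → ℝ → ℝ) (u₀ : ℝ → ℝ)
    (hu : ∀ n, IsExtSol m (Cseq n) (u n)) (hu₀ : IsExtSol m C₀ u₀) :
    ∃ φ : ℕ → ℕ, StrictMono φ ∧
      TendstoUniformlyOn (fun k => u (φ k)) u₀ Filter.atTop (Set.Icc 1 (m + 1)) := by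
  have hsol : ∀ n, IsSolOn m (Cseq n) (u n) (Icc 1 (m + 1)) := fun n => (hu n).isSolOn
  have hsol₀ := hu₀.isSolOn
  refine ⟨id, strictMono_id, ?_⟩
  rcases (hsol₀.2 (m + 1) (right_mem_Icc.2 (by linarith))).1.eq_or_lt with hzero | hpos
  · exact tendstoUniformlyOn_of_eq_zero hm hC hsol hsol₀ hzero.symm
  · refine tendstoUniformlyOn_Icc_of_pos hC hsol hsol₀ le_rfl fun x hx => ?_
    rcases hx.2.lt_or_eq with hlt | rfl
    · exact hsol₀.pos hm ⟨hx.1, hlt⟩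
    · exact hpos
end

section
/- Fix m > 0. The derivative with respect to C of C ↦ p_C(γ)·γ is independent of C and equals q(γ) = ((m+2)/(m+1)²)·γ⁴ − ((m²+3m+3)/(m+1)²)·γ³ + γ, which factors as ((m+2)/(m+1)²)·(γ + (m+1)/(m+2))·γ·(γ − 1)·(γ − (m+1)). Moreover q(γ) < 0 for all γ ∈ (1, m+1), and q(1) = q(m+1) = 0. -/
open Set Filter

/-- The polynomial `q(γ) = ((m+2)/(m+1)²)·γ⁴ − ((m²+3m+3)/(m+1)²)·γ³ + γ`. -/
noncomputable def qPoly (m γ : ℝ) : ℝ :=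
  (m + 2) / (m + 1) ^ 2 * γ ^ 4 - (m ^ 2 + 3 * m + 3) / (m + 1) ^ 2 * γ ^ 3 + γ

/-- `Q(γ) = ∫₁^γ q(y) dy`. -/
noncomputable def QPoly (m γ : ℝ) : ℝ := ∫ y in (1 : ℝ)..γ, qPoly m y

theorem pC_mul_eq_qPoly_mul_add {m : ℝ} (hm : m ≠ 0) (hm₁ : m + 1 ≠ 0) (C γ : ℝ) :
    pC m C γ * γ = qPoly m γ * C + pC m 0 γ * γ := by
  unfold pC Acoef Bcoef qPoly
  field_simp
  ring

theorem hasDerivAt_pC_mul {m : ℝ} (hm : m ≠ 0) (hm₁ : m + 1 ≠ 0) (C γ : ℝ) :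
    HasDerivAt (fun c => pC m c γ * γ) (qPoly m γ) C := by
  rw [funext fun c => pC_mul_eq_qPoly_mul_add hm hm₁ c γ]
  simpa using ((hasDerivAt_id C).const_mul (qPoly m γ)).add_const (pC m 0 γ * γ)

theorem qPoly_eq_factored {m : ℝ} (hm₁ : m + 1 ≠ 0) (hm₂ : m + 2 ≠ 0) (γ : ℝ) :
    qPoly m γ =
      (m + 2) / (m + 1) ^ 2 * (γ + (m + 1) / (m + 2)) * γ * (γ - 1) * (γ - (m + 1)) := by
  unfold qPoly
  field_simp
  ring

theorem qPoly_neg_of_mem_Ioo {m : ℝ} (hm : -1 < m) {γ : ℝ} (hγ : γ ∈ Ioo 1 (m + 1)) :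
    qPoly m γ < 0 := by
  obtain ⟨hγ₁, hγ₂⟩ := hγ
  rw [qPoly_eq_factored (by linarith) (by linarith)]
  have hlead : 0 < (m + 2) / (m + 1) ^ 2 := div_pos (by linarith) (pow_pos (by linarith) 2)
  have hshift : 0 < γ + (m + 1) / (m + 2) := by
    have : 0 < (m + 1) / (m + 2) := div_pos (by linarith) (by linarith)
    linarith
  have hpos := mul_pos (mul_pos (mul_pos hlead hshift) (by linarith : 0 < γ))
    (by linarith : 0 < γ - 1)
  exact mul_neg_of_pos_of_neg hpos (by linarith)

theorem qPoly_one {m : ℝ} (hm₁ : m + 1 ≠ 0) : qPoly m 1 = 0 := by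
  unfold qPoly
  field_simp
  ring

theorem qPoly_add_one (m : ℝ) : qPoly m (m + 1) = 0 := by
  unfold qPoly
  rcases eq_or_ne (m + 1) 0 with h | h
  · simp [h]
  · field_simp
    ring

/-- Lemma 3.2.2: the `C`-derivative of `C ↦ p_C(γ)·γ` is independent of `C` and equals
`q(γ)`, which factors as `((m+2)/(m+1)²)·(γ + (m+1)/(m+2))·γ·(γ−1)·(γ−(m+1))`;
moreover `q < 0` on `(1, m+1)` and `q(1) = q(m+1) = 0`. -/
theorem stmt10 (m : ℝ) (hm : 0 < m) :
    (∀ C γ : ℝ, HasDerivAt (fun c => pC m c γ * γ) (qPoly m γ) C) ∧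
    (∀ γ : ℝ, qPoly m γ =
      (m + 2) / (m + 1) ^ 2 * (γ + (m + 1) / (m + 2)) * γ * (γ - 1) * (γ - (m + 1))) ∧
    (∀ γ ∈ Set.Ioo (1 : ℝ) (m + 1), qPoly m γ < 0) ∧
    qPoly m 1 = 0 ∧ qPoly m (m + 1) = 0 := by
  have hm₁ : m + 1 ≠ 0 := by positivity
  exact ⟨hasDerivAt_pC_mul hm.ne' hm₁, qPoly_eq_factored hm₁ (by positivity),
    fun γ hγ => qPoly_neg_of_mem_Ioo (by linarith) hγ, qPoly_one hm₁, qPoly_add_one m⟩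
end

section
/- Fix m > 0. Let V ⊆ ℝ be a nondegenerate interval and J a nondegenerate subinterval of [1, m+1] containing 1 such that for every C ∈ V the smooth nonnegative solution v(·; C) of the ODE IVP v'(γ) = 2√2·√(v(γ)) + p_C(γ)·γ, v(1) = 2, exists on J. Then for all C, D ∈ V with C < D and all γ ∈ J: v(γ; C) ≥ v(γ; D) − Q(γ)·(D − C) ≥ v(γ; D), and the second inequality is strict whenever γ > 1. -/
open Set Filter

/-!
The gap `d = v(·; D) − Q·(D − C) − v(·; C)` vanishes at `1`, and since `p_D γ·γ − p_C γ·γ =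
q(γ)·(D − C)` the polynomial terms cancel in its derivative: `d' = 2√2·(√v(·; D) − √v(·; C))`.
Near `1` we have `v(·; C) ≥ 1`, and `√` is `1/2`-Lipschitz on `[1, ∞)`, so `d' ≤ √2·d` wherever
`d > 0` and a Grönwall barrier keeps `d ≤ 0`. Beyond that, `Q < 0` on `(1, m + 1]`, so at a
zero of `d` we have `v(·; D) < v(·; C)`, hence `d' < 0`, and `d` cannot cross `0`.
The remaining inequalities are just the sign of `Q`.
-/

section Barrier

variable {f f' : ℝ → ℝ} {a b : ℝ}

lemma hasDerivWithinAt_Ici_of_Icc (hf : ∀ x ∈ Icc a b, HasDerivWithinAt f (f' x) (Icc a b) x)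
    {x : ℝ} (hx : x ∈ Ico a b) : HasDerivWithinAt f (f' x) (Ici x) x :=
  (hf x (Ico_subset_Icc_self hx)).mono_of_mem_nhdsWithin (Icc_mem_nhdsGE_of_mem hx)

lemma nonpos_of_hasDerivWithinAt_le_mul {K : ℝ}
    (hf : ∀ x ∈ Icc a b, HasDerivWithinAt f (f' x) (Icc a b) x) (ha : f a ≤ 0)
    (bound : ∀ x ∈ Ico a b, 0 < f x → f' x ≤ K * f x) : ∀ x ∈ Icc a b, f x ≤ 0 := by
  have barrier : ∀ ε > 0, ∀ x ∈ Icc a b, f x ≤ ε * Real.exp ((K + 1) * (x - a)) := by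
    intro ε hε
    have hB : ∀ x, HasDerivAt (fun x => ε * Real.exp ((K + 1) * (x - a)))
        (ε * Real.exp ((K + 1) * (x - a)) * (K + 1)) x := fun x => by
      simpa [mul_assoc] using
        ((((hasDerivAt_id x).sub_const a).const_mul (K + 1)).exp).const_mul ε
    refine image_le_of_deriv_right_lt_deriv_boundary
      (fun x hx => (hf x hx).continuousWithinAt) (fun _ => hasDerivWithinAt_Ici_of_Icc hf) ?_ hB ?_
    · simpa using ha.trans hε.le
    · intro x hx hfx
      have hpos : 0 < ε * Real.exp ((K + 1) * (x - a)) := by positivity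
      have hf'x := bound x hx (hfx ▸ hpos)
      rw [hfx] at hf'x
      linarith
  intro x hx
  refine le_of_forall_pos_le_add fun η hη => ?_
  have hE : 0 < Real.exp ((K + 1) * (x - a)) := Real.exp_pos _
  simpa [hE.ne'] using barrier (η / Real.exp ((K + 1) * (x - a))) (by positivity) x hx

lemma nonpos_of_hasDerivWithinAt_neg_of_eq_zero
    (hf : ∀ x ∈ Icc a b, HasDerivWithinAt f (f' x) (Icc a b) x) (ha : f a ≤ 0)
    (bound : ∀ x ∈ Ico a b, f x = 0 → f' x < 0) : ∀ x ∈ Icc a b, f x ≤ 0 :=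
  image_le_of_deriv_right_lt_deriv_boundary (B := fun _ => 0)
    (fun x hx => (hf x hx).continuousWithinAt) (fun _ => hasDerivWithinAt_Ici_of_Icc hf) ha
    (fun x => hasDerivAt_const x 0) bound

end Barrier

lemma two_mul_sqrt_sub_sqrt_le {a c : ℝ} (hc : 1 ≤ c) (hca : c ≤ a) :
    2 * (√a - √c) ≤ a - c := by
  have hsc : 1 ≤ √c := Real.one_le_sqrt.2 hc
  have hsac : √c ≤ √a := Real.sqrt_le_sqrt hca
  have hsq : (√a - √c) * (√a + √c) = a - c := by
    rw [mul_comm, ← sq_sub_sq, Real.sq_sqrt (by linarith), Real.sq_sqrt (by linarith)]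
  nlinarith

lemma continuous_qPoly (m : ℝ) : Continuous (qPoly m) := by
  unfold qPoly
  fun_prop

lemma QPoly_eq (m γ : ℝ) : QPoly m γ = (m + 2) / (m + 1) ^ 2 * ((γ ^ 5 - 1) / 5)
    - (m ^ 2 + 3 * m + 3) / (m + 1) ^ 2 * ((γ ^ 4 - 1) / 4) + (γ ^ 2 - 1) / 2 := by
  have hF : ∀ x, HasDerivAt (fun x : ℝ => (m + 2) / (m + 1) ^ 2 * (x ^ 5 / 5)
      - (m ^ 2 + 3 * m + 3) / (m + 1) ^ 2 * (x ^ 4 / 4) + x ^ 2 / 2) (qPoly m x) x := fun x => by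
    refine ((((hasDerivAt_pow 5 x).div_const 5).const_mul ((m + 2) / (m + 1) ^ 2)).sub
      (((hasDerivAt_pow 4 x).div_const 4).const_mul ((m ^ 2 + 3 * m + 3) / (m + 1) ^ 2))).add
      ((hasDerivAt_pow 2 x).div_const 2) |>.congr_deriv ?_
    simp only [qPoly]
    push_cast
    ring
  rw [QPoly, intervalIntegral.integral_eq_sub_of_hasDerivAt (fun x _ => hF x)
    ((continuous_qPoly m).intervalIntegrable _ _)]
  ring

lemma QPoly_one (m : ℝ) : QPoly m 1 = 0 := intervalIntegral.integral_same

lemma hasDerivAt_QPoly (m x : ℝ) : HasDerivAt (QPoly m) (qPoly m x) x := by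
  exact (continuous_qPoly m).integral_hasStrictDerivAt 1 x |>.hasDerivAt

lemma QPoly_neg {m γ : ℝ} (hm : 0 < m) (h1 : 1 < γ) (h2 : γ ≤ m + 1) : QPoly m γ < 0 := by
  set t := γ - 1 with ht_def
  have ht : 0 < t := by linarith
  have htm : 0 ≤ m - t := by linarith
  -- `20 (m+1)² Q(1+t) = t² S(t)` with a cubic `S` that is negative on `(0, m]`
  have hS : (4 * m + 8) * t ^ 3 + (-5 * m ^ 2 + 5 * m + 25) * t ^ 2
      + (-20 * m ^ 2 - 20 * m + 20) * t + (-20 * m ^ 2 - 30 * m) < 0 := by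
    nlinarith [mul_nonneg (mul_nonneg ht.le ht.le) htm, mul_nonneg ht.le htm,
      mul_nonneg (mul_nonneg hm.le ht.le) htm,
      mul_nonneg (mul_nonneg (mul_nonneg hm.le hm.le) ht.le) htm,
      mul_pos hm ht, mul_pos (mul_pos hm hm) ht, mul_pos hm hm,
      mul_pos (mul_pos hm hm) hm, mul_pos (mul_pos (mul_pos hm hm) hm) hm]
  have hfactor : 20 * (m + 1) ^ 2 * QPoly m γ = t ^ 2 * ((4 * m + 8) * t ^ 3
      + (-5 * m ^ 2 + 5 * m + 25) * t ^ 2 + (-20 * m ^ 2 - 20 * m + 20) * t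
      + (-20 * m ^ 2 - 30 * m)) := by
    rw [QPoly_eq, ht_def]
    field_simp
    ring
  have h20 : 0 < 20 * (m + 1) ^ 2 := by positivity
  have := mul_neg_of_pos_of_neg (pow_pos ht 2) hS
  rw [← hfactor] at this
  exact neg_of_mul_neg_right this h20.le

lemma QPoly_nonpos {m γ : ℝ} (hm : 0 < m) (h1 : 1 ≤ γ) (h2 : γ ≤ m + 1) : QPoly m γ ≤ 0 := by
  rcases h1.eq_or_lt with rfl | h1
  · exact (QPoly_one m).le
  · exact (QPoly_neg hm h1 h2).le

lemma pC_mul_sub_pC_mul {m : ℝ} (hm : 0 < m) (C D γ : ℝ) :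
    pC m D γ * γ - pC m C γ * γ = qPoly m γ * (D - C) := by
  have hm0 : m ≠ 0 := hm.ne'
  have hm1 : m + 1 ≠ 0 := by positivity
  simp only [pC, Acoef, Bcoef, qPoly]
  field_simp
  ring

lemma hasDerivWithinAt_sub_QPoly_mul_sub {m C D x : ℝ} {vC vD : ℝ → ℝ} {S : Set ℝ}
    (hm : 0 < m) (hC : IsSolOn m C vC S) (hD : IsSolOn m D vD S) (hx : x ∈ S) :
    HasDerivWithinAt (fun y => vD y - QPoly m y * (D - C) - vC y)
      (2 * √2 * (√(vD x) - √(vC x))) S x := by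
  refine (((hD.2 x hx).2.sub ((hasDerivAt_QPoly m x).hasDerivWithinAt.mul_const (D - C))).sub
    (hC.2 x hx).2).congr_deriv ?_
  have := pC_mul_sub_pC_mul hm C D x
  simp only [odeRHS]
  linarith

lemma sub_QPoly_mul_le_of_isSolOn {m C D γ : ℝ} {vC vD : ℝ → ℝ} {J : Set ℝ} (hm : 0 < m)
    (hJsub : J ⊆ Icc 1 (m + 1)) (hJconn : J.OrdConnected) (hJ1 : 1 ∈ J)
    (hC : IsSolOn m C vC J) (hD : IsSolOn m D vD J) (hCD : C < D) (hγ : γ ∈ J) :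
    vD γ - QPoly m γ * (D - C) ≤ vC γ := by
  obtain ⟨hγ1, hγm⟩ := hJsub hγ
  rcases hγ1.eq_or_lt with rfl | hγ1
  · simp [QPoly_one, hC.1, hD.1]
  set d := fun y => vD y - QPoly m y * (D - C) - vC y with hd
  have hIJ : Icc 1 γ ⊆ J := hJconn.out hJ1 hγ
  have hd' : ∀ {a b}, Icc a b ⊆ Icc 1 γ → ∀ x ∈ Icc a b,
      HasDerivWithinAt d (2 * √2 * (√(vD x) - √(vC x))) (Icc a b) x := fun hab x hx =>
    (hasDerivWithinAt_sub_QPoly_mul_sub hm hC hD (hIJ (hab hx))).mono (hab.trans hIJ)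
  obtain ⟨b, hb, hvC⟩ : ∃ b ∈ Ioc 1 γ, ∀ x ∈ Icc 1 b, 1 ≤ vC x := by
    have hcont : ContinuousWithinAt vC (Ici 1) 1 := by
      rw [← continuousWithinAt_Icc_iff_Ici hγ1]
      exact ((hC.2 1 hJ1).2.mono hIJ).continuousWithinAt
    obtain ⟨u, hu, hsub⟩ := mem_nhdsGE_iff_exists_Icc_subset.1
      (hcont.preimage_mem_nhdsWithin (Ici_mem_nhds (by rw [hC.1]; norm_num : (1 : ℝ) < vC 1)))
    exact ⟨min u γ, ⟨lt_min hu hγ1, min_le_right _ _⟩,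
      fun x hx => hsub ⟨hx.1, hx.2.trans (min_le_left _ _)⟩⟩
  have near : ∀ x ∈ Icc 1 b, d x ≤ 0 := by
    refine nonpos_of_hasDerivWithinAt_le_mul (K := √2) (hd' (Icc_subset_Icc_right hb.2))
      (by simp [hd, QPoly_one, hC.1, hD.1]) fun x hx _ => ?_
    have hQ : QPoly m x * (D - C) ≤ 0 := mul_nonpos_of_nonpos_of_nonneg
      (QPoly_nonpos hm hx.1 (by linarith [hx.2, hb.2])) (sub_nonneg.2 hCD.le)
    rcases le_total (vD x) (vC x) with hle | hle
    · have : √(vD x) ≤ √(vC x) := Real.sqrt_le_sqrt hle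
      nlinarith [Real.sqrt_nonneg 2]
    · calc 2 * √2 * (√(vD x) - √(vC x)) = √2 * (2 * (√(vD x) - √(vC x))) := by ring
        _ ≤ √2 * d x := by
          gcongr
          linarith [two_mul_sqrt_sub_sqrt_le (hvC x (Ico_subset_Icc_self hx)) hle]
  suffices d γ ≤ 0 by simp only [hd] at this; linarith
  refine nonpos_of_hasDerivWithinAt_neg_of_eq_zero (hd' (Icc_subset_Icc_left hb.1.le))
    (near b ⟨hb.1.le, le_rfl⟩) (fun x hx hdx => ?_) γ ⟨hb.2, le_rfl⟩
  have hQ : QPoly m x < 0 := QPoly_neg hm (hb.1.trans_le hx.1) (by linarith [hx.2])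
  have hlt : vD x < vC x := by
    simp only [hd] at hdx
    nlinarith [mul_neg_of_neg_of_pos hQ (sub_pos.2 hCD)]
  have := Real.sqrt_lt_sqrt (hD.2 x (hIJ ⟨(hb.1.trans_le hx.1).le, hx.2.le⟩)).1 hlt
  exact mul_neg_of_pos_of_neg (by positivity) (sub_neg.2 this)

theorem stmt12_general (m : ℝ) (hm : 0 < m)
    (V : Set ℝ)
    (J : Set ℝ) (hJsub : J ⊆ Set.Icc 1 (m + 1)) (hJconn : J.OrdConnected)
    (hJ1 : (1 : ℝ) ∈ J)
    (v : ℝ → ℝ → ℝ) (hsol : ∀ C ∈ V, IsSolOn m C (v C) J) :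
    ∀ C ∈ V, ∀ D ∈ V, C < D → ∀ γ ∈ J,
      v D γ - QPoly m γ * (D - C) ≤ v C γ ∧
      v D γ ≤ v D γ - QPoly m γ * (D - C) ∧
      (1 < γ → v D γ < v D γ - QPoly m γ * (D - C)) := by
  intro C hC D hD hCD γ hγ
  obtain ⟨hγ1, hγm⟩ := hJsub hγ
  have hDC : 0 < D - C := sub_pos.2 hCD
  refine ⟨sub_QPoly_mul_le_of_isSolOn hm hJsub hJconn hJ1 (hsol C hC) (hsol D hD) hCD hγ,
    ?_, fun h1 => ?_⟩
  · linarith [mul_nonpos_of_nonpos_of_nonneg (QPoly_nonpos hm hγ1 hγm) hDC.le]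
  · linarith [mul_neg_of_neg_of_pos (QPoly_neg hm h1 hγm) hDC]

/-- Theorem 3.2.5 (monotonicity in `C`): if for every `C` in a nondegenerate interval
`V` the solution `v(·; C)` of the IVP exists on a nondegenerate subinterval `J` of
`[1, m+1]` containing `1`, then for `C < D` in `V` and `γ ∈ J` one has
`v(γ; C) ≥ v(γ; D) − Q(γ)·(D − C) ≥ v(γ; D)`, the second inequality being strict
whenever `γ > 1`. -/
theorem stmt12 (m : ℝ) (hm : 0 < m)
    (V : Set ℝ) (hVconn : V.OrdConnected) (hVnd : ∃ a ∈ V, ∃ b ∈ V, a < b)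
    (J : Set ℝ) (hJsub : J ⊆ Set.Icc 1 (m + 1)) (hJconn : J.OrdConnected)
    (hJ1 : (1 : ℝ) ∈ J) (hJnd : ∃ a ∈ J, ∃ b ∈ J, a < b)
    (v : ℝ → ℝ → ℝ) (hsol : ∀ C ∈ V, IsSolOn m C (v C) J) :
    ∀ C ∈ V, ∀ D ∈ V, C < D → ∀ γ ∈ J,
      v D γ - QPoly m γ * (D - C) ≤ v C γ ∧
      v D γ ≤ v D γ - QPoly m γ * (D - C) ∧
      (1 < γ → v D γ < v D γ - QPoly m γ * (D - C)) :=
  stmt12_general m hm V J hJsub hJconn hJ1 v hsol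
end

section
/- Fix m > 0 and let 𝒞 = {C ∈ ℝ : the smooth nonnegative solution v_C of the ODE IVP exists on all of [1, m+1]}. Then (−∞, 2] ⊆ 𝒞, and v_C(m+1) → ∞ as C → −∞. -/
open Set Filter

/-!
Since `√v ≥ 0`, a solution satisfies `v' ≥ p_C(γ) γ`, so `v γ ≥ 2 + P γ - P 1` for an
antiderivative `P` of `p_C(γ) γ`. For `C ≤ 2`, `P γ - P 1 ≥ 0` on `[1, m+1]`, and at `γ = m + 1`
it is at least `(2 - C) m³ / (2 (m+1)²)`, which gives the blow-up as `C → -∞`. For existence,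
replacing `√v` by `√(max v 1)` makes the right-hand side Lipschitz with sublinear growth, so
Picard–Lindelöf yields a solution on all of `[1, m+1]`; by the same lower bound it stays `≥ 2`,
so the cutoff is never active.
-/

open NNReal Metric

theorem exists_forall_mem_Icc_hasDerivWithinAt_of_norm_le_mul_add
    {E : Type*} [NormedAddCommGroup E] [NormedSpace ℝ E] [CompleteSpace E]
    {f : ℝ → E → E} {tmin tmax : ℝ} (hT : tmin ≤ tmax) {x₀ : E} {K : ℝ≥0} {c d : ℝ}
    (hlip : ∀ t ∈ Icc tmin tmax, LipschitzWith K (f t))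
    (hcont : ∀ x, ContinuousOn (f · x) (Icc tmin tmax))
    (hnorm : ∀ t ∈ Icc tmin tmax, ∀ x, ‖f t x‖ ≤ c * ‖x - x₀‖ + d)
    (hc : 0 ≤ c) (hcT : c * (tmax - tmin) < 1) :
    ∃ α : ℝ → E, α tmin = x₀ ∧
      ∀ t ∈ Icc tmin tmax, HasDerivWithinAt α (f t (α t)) (Icc tmin tmax) t := by
  set T := tmax - tmin
  have hd : 0 ≤ d := by
    simpa using (norm_nonneg _).trans (hnorm tmin ⟨le_rfl, hT⟩ x₀)
  -- `a` solves `(c a + d) T = a`: on the ball of radius `a` the field is bounded by `c a + d`.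
  set a : ℝ≥0 := ⟨d * T / (1 - c * T), by have : 0 ≤ T := sub_nonneg.2 hT; positivity⟩
  have ha : (a : ℝ) * (1 - c * T) = d * T := div_mul_cancel₀ _ (by linarith)
  have hPL : IsPicardLindelof f (⟨tmin, le_rfl, hT⟩ : Icc tmin tmax) x₀ a 0
      ⟨c * a + d, by positivity⟩ K :=
    { lipschitzOnWith := fun t ht => (hlip t ht).lipschitzOnWith
      continuousOn := fun x _ => hcont x
      norm_le := fun t ht x hx => (hnorm t ht x).trans <| by
        show c * ‖x - x₀‖ + d ≤ c * a + d
        gcongr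
        exact mem_closedBall_iff_norm.1 hx
      mul_max_le := by
        show (c * a + d) * max T (tmin - tmin) ≤ a - (0 : ℝ≥0)
        rw [sub_self, max_eq_left (sub_nonneg.2 hT), NNReal.coe_zero, sub_zero]
        linarith }
  exact hPL.exists_eq_forall_mem_Icc_hasDerivWithinAt₀

lemma lipschitzOnWith_sqrt_Ici_one : LipschitzOnWith 2⁻¹ Real.sqrt (Ici 1) := by
  refine LipschitzOnWith.of_dist_le_mul fun x hx y hy => ?_
  have hsx : 1 ≤ √x := Real.one_le_sqrt.2 hx
  have hsy : 1 ≤ √y := Real.one_le_sqrt.2 hy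
  have key : |√x - √y| * (√x + √y) = |x - y| := by
    rw [← abs_of_pos (by positivity : 0 < √x + √y), ← abs_mul]
    congr 1
    linear_combination Real.mul_self_sqrt (zero_le_one.trans hx) -
      Real.mul_self_sqrt (zero_le_one.trans hy)
  rw [Real.dist_eq, Real.dist_eq, NNReal.coe_inv, NNReal.coe_ofNat]
  nlinarith [abs_nonneg (√x - √y)]

lemma two_mul_sqrt_two_mul_sqrt_le {m y : ℝ} (hm : 0 < m) (hy : 0 ≤ y) :
    2 * √2 * √y ≤ y / (2 * m) + 4 * m := by
  have key : 2 * √2 * √y * (2 * m) = y + 8 * m ^ 2 - (√y - 2 * √2 * m) ^ 2 := by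
    linear_combination Real.sq_sqrt hy + 4 * m ^ 2 * Real.sq_sqrt zero_le_two
  rw [div_add' _ _ _ (by positivity), le_div_iff₀ (by positivity), key]
  nlinarith [sq_nonneg (√y - 2 * √2 * m)]

lemma sub_le_sub_of_hasDerivWithinAt_Icc_le {f g f' g' : ℝ → ℝ} {a b x : ℝ}
    (hg : ∀ y ∈ Icc a b, HasDerivWithinAt g (g' y) (Icc a b) y)
    (hf : ∀ y ∈ Icc a b, HasDerivWithinAt f (f' y) (Icc a b) y)
    (hle : ∀ y ∈ Ico a b, g' y ≤ f' y) (hx : x ∈ Icc a b) :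
    g x - g a ≤ f x - f a := by
  have hIci {h h' : ℝ → ℝ} (hh : ∀ y ∈ Icc a b, HasDerivWithinAt h (h' y) (Icc a b) y)
      (y : ℝ) (hy : y ∈ Ico a b) : HasDerivWithinAt h (h' y) (Ici y) y :=
    (hh y (Ico_subset_Icc_self hy)).mono_of_mem_nhdsWithin (Icc_mem_nhdsGE_of_mem hy)
  have key := image_le_of_deriv_right_le_deriv_boundary (f := fun y => g y - g a + f a)
    (fun y hy => ((hg y hy).continuousWithinAt.sub_const _).add_const _)
    (fun y hy => ((hIci hg y hy).sub_const _).add_const _) (by simp)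
    (fun y hy => (hf y hy).continuousWithinAt) (hIci hf) hle hx
  linarith

noncomputable def pCAntideriv (m C γ : ℝ) : ℝ :=
  Acoef m C * γ ^ 5 / 15 + Bcoef m C * γ ^ 4 / 8 + C * γ ^ 2 / 2

lemma hasDerivAt_pCAntideriv (m C γ : ℝ) :
    HasDerivAt (pCAntideriv m C) (pC m C γ * γ) γ := by
  have h := ((((hasDerivAt_pow 5 γ).const_mul (Acoef m C)).div_const 15).add
    (((hasDerivAt_pow 4 γ).const_mul (Bcoef m C)).div_const 8)).add
    (((hasDerivAt_pow 2 γ).const_mul C).div_const 2)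
  refine h.congr_deriv ?_
  simp only [pC]
  norm_num
  ring

lemma pCAntideriv_sub_nonneg {m C γ : ℝ} (hm : 0 < m) (hC : C ≤ 2) (hγ : γ ∈ Icc 1 (m + 1)) :
    0 ≤ pCAntideriv m C γ - pCAntideriv m C 1 := by
  obtain ⟨s, hs⟩ : ∃ s, γ - 1 = s ^ 2 :=
    ⟨√(γ - 1), (Real.sq_sqrt (by linarith [hγ.1])).symm⟩
  obtain ⟨u, hu⟩ : ∃ u, m + 1 - γ = u ^ 2 :=
    ⟨√(m + 1 - γ), (Real.sq_sqrt (by linarith [hγ.2])).symm⟩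
  obtain ⟨c, hc⟩ : ∃ c, 2 - C = c ^ 2 := ⟨√(2 - C), (Real.sq_sqrt (by linarith)).symm⟩
  -- Expanded in `γ - 1`, `m + 1 - γ` and `2 - C`, the numerator has only nonnegative coefficients.
  have key : pCAntideriv m C γ - pCAntideriv m C 1 =
      ((γ-1) * (240*(m+1-γ) + 480*(m+1-γ)^2 + 240*(m+1-γ)^3 + 1080*(γ-1)*(m+1-γ)
        + 960*(γ-1)*(m+1-γ)^2 + 120*(γ-1)*(m+1-γ)^3 + 120*(γ-1)^2 + 1200*(γ-1)^2*(m+1-γ)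
        + 360*(γ-1)^2*(m+1-γ)^2 + 120*(γ-1)^3 + 360*(γ-1)^3*(m+1-γ) + 24*(γ-1)^4)
       + (2-C) * (γ-1)^2 * (180*(m+1-γ)^2 + 120*(m+1-γ)^3 + 240*(γ-1)*(m+1-γ)
        + 480*(γ-1)*(m+1-γ)^2 + 120*(γ-1)*(m+1-γ)^3 + 60*(γ-1)^2 + 450*(γ-1)^2*(m+1-γ)
        + 330*(γ-1)^2*(m+1-γ)^2 + 30*(γ-1)^2*(m+1-γ)^3 + 90*(γ-1)^3 + 252*(γ-1)^3*(m+1-γ)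
        + 66*(γ-1)^3*(m+1-γ)^2 + 42*(γ-1)^4 + 42*(γ-1)^4*(m+1-γ) + 6*(γ-1)^5))
      / (120 * m * (m+1)^2) := by
    unfold pCAntideriv Acoef Bcoef
    field_simp
    ring
  rw [key, hs, hu, hc]
  positivity

lemma mul_le_pCAntideriv_sub {m C : ℝ} (hm : 0 < m) (hC : C ≤ 2) :
    (2 - C) * (m ^ 3 / (2 * (m + 1) ^ 2)) ≤ pCAntideriv m C (m + 1) - pCAntideriv m C 1 := by
  have h2C : 0 ≤ 2 - C := by linarith
  have key : pCAntideriv m C (m + 1) - pCAntideriv m C 1 =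
      (2 - C) * (m ^ 3 / (2 * (m + 1) ^ 2)) + (120 * m ^ 3 + 120 * m ^ 4 + 24 * m ^ 5
        + (2 - C) * (90 * m ^ 5 + 42 * m ^ 6 + 6 * m ^ 7)) / (120 * m * (m + 1) ^ 2) := by
    unfold pCAntideriv Acoef Bcoef
    field_simp
    ring
  rw [key]
  exact le_add_of_nonneg_right (by positivity)

lemma two_add_pCAntideriv_sub_le {m C γ : ℝ} {v v' : ℝ → ℝ} (hv1 : v 1 = 2)
    (hv : ∀ γ ∈ Icc 1 (m + 1), HasDerivWithinAt v (v' γ) (Icc 1 (m + 1)) γ)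
    (hle : ∀ γ ∈ Icc 1 (m + 1), pC m C γ * γ ≤ v' γ) (hγ : γ ∈ Icc 1 (m + 1)) :
    2 + (pCAntideriv m C γ - pCAntideriv m C 1) ≤ v γ := by
  have := sub_le_sub_of_hasDerivWithinAt_Icc_le
    (fun γ _ => (hasDerivAt_pCAntideriv m C γ).hasDerivWithinAt) hv
    (fun γ hγ => hle γ (Ico_subset_Icc_self hγ)) hγ
  linarith

lemma IsSolOn.two_add_pCAntideriv_sub_le {m C γ : ℝ} {v : ℝ → ℝ}
    (hv : IsSolOn m C v (Icc 1 (m + 1))) (hγ : γ ∈ Icc 1 (m + 1)) :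
    2 + (pCAntideriv m C γ - pCAntideriv m C 1) ≤ v γ :=
  _root_.two_add_pCAntideriv_sub_le hv.1 (fun γ hγ => (hv.2 γ hγ).2)
    (fun γ _ => le_add_of_nonneg_left (by positivity)) hγ

noncomputable def cutoffRHS (m C γ x : ℝ) : ℝ :=
  2 * √2 * √(max x 1) + pC m C γ * γ

lemma exists_cutoffRHS_solution {m : ℝ} (hm : 0 < m) (C : ℝ) :
    ∃ v : ℝ → ℝ, v 1 = 2 ∧
      ∀ γ ∈ Icc 1 (m + 1), HasDerivWithinAt v (cutoffRHS m C γ (v γ)) (Icc 1 (m + 1)) γ := by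
  have hcont : Continuous fun γ => pC m C γ * γ := by unfold pC; fun_prop
  obtain ⟨Q, hQ⟩ :=
    isCompact_Icc.exists_bound_of_continuousOn (hcont.continuousOn (s := Icc 1 (m + 1)))
  have hsqrt : LipschitzWith (2⁻¹ * 1) fun x : ℝ => √(max x 1) :=
    lipschitzOnWith_univ.1 <| lipschitzOnWith_sqrt_Ici_one.comp
      (LipschitzWith.id.max_const 1).lipschitzOnWith fun x _ => le_max_right x 1
  refine exists_forall_mem_Icc_hasDerivWithinAt_of_norm_le_mul_add (by linarith)
    (fun γ _ => ((lipschitzWith_smul (2 * √2)).comp hsqrt).add (LipschitzWith.const _))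
    (fun x => by unfold cutoffRHS pC; fun_prop) (c := 1 / (2 * m)) (d := 1 / m + 4 * m + Q)
    (fun γ hγ x => ?_) (by positivity) (by field_simp; linarith)
  have hmax : max x 1 ≤ ‖x - 2‖ + 2 := by
    rw [Real.norm_eq_abs]
    exact max_le (by linarith [le_abs_self (x - 2)]) (by linarith [abs_nonneg (x - 2)])
  calc ‖cutoffRHS m C γ x‖ ≤ 2 * √2 * √(max x 1) + ‖pC m C γ * γ‖ := by
        refine (norm_add_le _ _).trans_eq ?_
        rw [Real.norm_of_nonneg (by positivity)]
    _ ≤ max x 1 / (2 * m) + 4 * m + Q := by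
        gcongr
        · exact two_mul_sqrt_two_mul_sqrt_le hm (zero_le_one.trans (le_max_right x 1))
        · exact hQ γ hγ
    _ ≤ (‖x - 2‖ + 2) / (2 * m) + 4 * m + Q := by gcongr
    _ = 1 / (2 * m) * ‖x - 2‖ + (1 / m + 4 * m + Q) := by field_simp; ring

theorem exists_isSolOn {m C : ℝ} (hm : 0 < m) (hC : C ≤ 2) :
    ∃ v : ℝ → ℝ, IsSolOn m C v (Icc 1 (m + 1)) := by
  obtain ⟨v, hv1, hv⟩ := exists_cutoffRHS_solution hm C
  have hv2 : ∀ γ ∈ Icc 1 (m + 1), 2 ≤ v γ := fun γ hγ => by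
    have := two_add_pCAntideriv_sub_le hv1 hv
      (fun γ _ => le_add_of_nonneg_left (by positivity)) hγ
    linarith [pCAntideriv_sub_nonneg hm hC hγ]
  refine ⟨v, hv1, fun γ hγ => ⟨by linarith [hv2 γ hγ], ?_⟩⟩
  have hmax : max (v γ) 1 = v γ := max_eq_left (by linarith [hv2 γ hγ])
  simpa only [odeRHS, cutoffRHS, hmax] using hv γ hγ

/-- Lemma 3.2.7 (Pingali): `(−∞, 2] ⊆ 𝒞`, i.e. for every `C ≤ 2` the solution `v_C` of
the IVP exists on all of `[1, m+1]`; moreover `v_C(m+1) → ∞` as `C → −∞`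
(for every `R` there is a threshold `C'` such that every solution on `[1, m+1]` with
parameter `C ≤ C'` has `v(m+1) ≥ R`). -/
theorem stmt13 (m : ℝ) (hm : 0 < m) :
    (∀ C : ℝ, C ≤ 2 → ∃ v : ℝ → ℝ, IsSolOn m C v (Set.Icc 1 (m + 1))) ∧
    (∀ R : ℝ, ∃ C' : ℝ, ∀ C : ℝ, C ≤ C' →
      ∀ v : ℝ → ℝ, IsSolOn m C v (Set.Icc 1 (m + 1)) → R ≤ v (m + 1)) := by
  refine ⟨fun C hC => exists_isSolOn hm hC, fun R => ?_⟩
  have hc : 0 < m ^ 3 / (2 * (m + 1) ^ 2) := by positivity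
  refine ⟨2 - |R| / (m ^ 3 / (2 * (m + 1) ^ 2)), fun C hC v hv => ?_⟩
  have hR : |R| ≤ (2 - C) * (m ^ 3 / (2 * (m + 1) ^ 2)) := by
    rw [← div_le_iff₀ hc]
    linarith
  have hC2 : C ≤ 2 := by linarith [div_nonneg (abs_nonneg R) hc.le]
  have hv_end := hv.two_add_pCAntideriv_sub_le ⟨by linarith, le_rfl⟩
  linarith [mul_le_pCAntideriv_sub hm hC2, le_abs_self R]
end

section
/- For every real m > 0, the quantities L(m) = (3/10)(m+1)² − (1/20)(m+1)⁴ − 1/4 − ((m+1)⁴ − 1)/(20m) · [1 − 1/(m+1)²] and N(m) = (1/10)(m+1)⁴ − (2/5)(m+1)² − 1/2 + ((m+1)⁴ − 1)/(10m) · [1 + 1/(m+1)²] satisfy 2·L(m) + N(m) > 0; equivalently, since L(m) < 0, one has −N(m)/L(m) > 2. -/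
open Set Filter

/-- `L(m)` from Lemma 3.2.1. -/
noncomputable def Lm (m : ℝ) : ℝ :=
  3 / 10 * (m + 1) ^ 2 - 1 / 20 * (m + 1) ^ 4 - 1 / 4 -
    ((m + 1) ^ 4 - 1) / (20 * m) * (1 - 1 / (m + 1) ^ 2)

/-- `N(m)` from Lemma 3.2.1. -/
noncomputable def Nm (m : ℝ) : ℝ :=
  1 / 10 * (m + 1) ^ 4 - 2 / 5 * (m + 1) ^ 2 - 1 / 2 +
    ((m + 1) ^ 4 - 1) / (10 * m) * (1 + 1 / (m + 1) ^ 2)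

/-- For every `m > 0`, `2·L(m) + N(m) > 0`; equivalently, since `L(m) < 0`,
`−N(m)/L(m) > 2`. -/
theorem stmt19 (m : ℝ) (hm : 0 < m) :
    0 < 2 * Lm m + Nm m ∧ 2 < -Nm m / Lm m := by
  have hm1 : (0:ℝ) < (m+1)^2 := by positivity
  have hL : Lm m < 0 := by
    have h : Lm m = -(m^4*(m^3+7*m^2+15*m+10)) / (20*m*(m+1)^2) := by
      rw [Lm]; field_simp; ring
    rw [h, neg_div, neg_lt_zero]
    positivity
  have hKey : 0 < 2 * Lm m + Nm m := by
    have h : 2 * Lm m + Nm m = (m^3*(m^2+5*m+5)) / (5*m*(m+1)^2) := by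
      rw [Lm, Nm]; field_simp; ring
    rw [h]; positivity
  exact ⟨hKey, by rw [lt_div_iff_of_neg hL]; linarith⟩
end
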